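/- arXiv:math/0610968 — 8 statements merged into one kernel-verified Lean document; each statement's English description precedes it below -/
import Mathlib

section
/- Let p be an odd prime, ζ a primitive p-th root of unity, K = ℚ(ζ), O_K = ℤ[ζ], and π = (1-ζ)O_K the prime ideal above p. If α, β ∈ O_K with α ≢ 0 mod π and α ≡ β mod π, then α^p ≡ β^p mod π^(p+1). -/
open scoped NumberField

/-!
Put `λ = ζ - 1`, which generates the same ideal as `1 - ζ`, and write `α = β + λγ`. In the
binomial expansion of `(β + λγ)^p` every middle term is divisible by `p λ²`, and `λ^(p-1) ∣ p`, so
`α^p - β^p ≡ λ (p β^(p-1) γ + λ^(p-1) γ^p) mod λ^(p+1)`. Expanding `(1 + λ)^p = 1` in the same way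
gives `p ≡ -λ^(p-1) mod λ^p`, so the bracket is `≡ λ^(p-1) (γ^p - β^(p-1) γ) mod λ^p`. Since the
residue field `𝓞 K / λ` has `p` elements, `γ^p ≡ γ` and, as `λ ∤ β`, `β^(p-1) ≡ 1` modulo `λ`.
-/

open Finset in
theorem exists_add_pow_prime_eq_add_mul_sq {R : Type*} [CommRing R] {p : ℕ} (hp : p.Prime)
    (x y : R) : ∃ c : R, (x + y) ^ p = x ^ p + p * x ^ (p - 1) * y + y ^ p + p * y ^ 2 * c := by
  have hmiddle : (p * y ^ 2 : R) ∣ ∑ k ∈ Ico 2 p, y ^ k * x ^ (p - k) * (p.choose k : R) := by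
    refine dvd_sum fun k hk => ?_
    obtain ⟨hk2, hkp⟩ := mem_Ico.mp hk
    obtain ⟨m, hm⟩ := hp.dvd_choose_self (by omega) hkp
    refine ⟨y ^ (k - 2) * x ^ (p - k) * m, ?_⟩
    rw [hm, Nat.cast_mul, ← pow_sub_mul_pow y hk2]
    ring
  obtain ⟨c, hc⟩ := hmiddle
  refine ⟨c, ?_⟩
  rw [add_comm x y, add_pow, sum_range_succ, range_eq_Ico,
    sum_eq_sum_Ico_succ_bot hp.pos, sum_eq_sum_Ico_succ_bot hp.one_lt, hc]
  simp only [pow_zero, tsub_zero, one_mul, Nat.choose_zero_right, Nat.cast_one, mul_one, pow_one,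
    Nat.choose_one_right, tsub_self, Nat.choose_self]
  ring

theorem Prime.dvd_pow_card_quotient_sub_self {R : Type*} [CommRing R] {δ : R} (hδ : Prime δ)
    [Finite (R ⧸ Ideal.span {δ})] (x : R) :
    δ ∣ x ^ Nat.card (R ⧸ Ideal.span {δ}) - x := by
  classical
  have := (Ideal.span_singleton_prime hδ.ne_zero).mpr hδ
  let := Fintype.ofFinite (R ⧸ Ideal.span {δ})
  let := Fintype.fieldOfDomain (R ⧸ Ideal.span {δ})
  rw [← Ideal.mem_span_singleton, ← Ideal.Quotient.eq_zero_iff_mem, map_sub, map_pow,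
    Nat.card_eq_fintype_card, FiniteField.pow_card, sub_self]

theorem IsPrimitiveRoot.sub_one_pow_dvd_natCast_add {R : Type*} [CommRing R] [IsDomain R]
    {p : ℕ} (hp : p.Prime) {ζ : R} (hζ : IsPrimitiveRoot ζ p) (h : (ζ - 1) ^ (p - 1) ∣ (p : R)) :
    (ζ - 1) ^ p ∣ p + (ζ - 1) ^ (p - 1) := by
  obtain ⟨c, hc⟩ := exists_add_pow_prime_eq_add_mul_sq hp 1 (ζ - 1)
  have hδ : ζ - 1 ≠ 0 := sub_ne_zero.mpr (hζ.ne_one hp.one_lt)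
  have hpow := pow_sub_one_mul hp.ne_zero (ζ - 1)
  have : (ζ - 1) * (p + (ζ - 1) ^ (p - 1)) = (ζ - 1) * -(p * (ζ - 1) * c) := by
    rw [add_sub_cancel, hζ.pow_eq_one] at hc
    linear_combination -hc + hpow
  rw [mul_left_cancel₀ hδ this, ← hpow, dvd_neg]
  exact (mul_dvd_mul h dvd_rfl).mul_right c

theorem pow_succ_dvd_pow_sub_pow {R : Type*} [CommRing R] {p : ℕ} (hp : p.Prime) {δ α β : R}
    (hδ : Prime δ) (hδp : δ ^ p ∣ p + δ ^ (p - 1)) (hfrob : ∀ x : R, δ ∣ x ^ p - x)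
    (hα : ¬ δ ∣ α) (hαβ : δ ∣ α - β) : δ ^ (p + 1) ∣ α ^ p - β ^ p := by
  obtain ⟨γ, hγ⟩ := hαβ
  obtain rfl : α = β + δ * γ := by linear_combination hγ
  have hβ : ¬ δ ∣ β := fun h => hα (dvd_add h (dvd_mul_right δ γ))
  have hfermat : δ ∣ β ^ (p - 1) - 1 := by
    refine (hδ.dvd_or_dvd ?_).resolve_left hβ
    rw [mul_sub_one, ← pow_succ', Nat.sub_add_cancel hp.one_le]
    exact hfrob β
  have hpow := pow_sub_one_mul hp.ne_zero δ
  have hp_dvd : δ ^ (p - 1) ∣ (p : R) :=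
    (dvd_add_left dvd_rfl).mp ((hpow ▸ dvd_mul_right _ δ).trans hδp)
  have hlinear : δ ^ p ∣ p * β ^ (p - 1) * γ + δ ^ (p - 1) * γ ^ p := by
    have : p * β ^ (p - 1) * γ + δ ^ (p - 1) * γ ^ p = (p + δ ^ (p - 1)) * (β ^ (p - 1) * γ)
        + δ ^ (p - 1) * (γ ^ p - γ - γ * (β ^ (p - 1) - 1)) := by ring
    rw [this, ← hpow]
    exact dvd_add (hpow ▸ hδp |>.mul_right _)
      (mul_dvd_mul_left _ (dvd_sub (hfrob γ) (hfermat.mul_left γ)))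
  obtain ⟨c, hc⟩ := exists_add_pow_prime_eq_add_mul_sq hp β (δ * γ)
  have : (β + δ * γ) ^ p - β ^ p
      = δ * (p * β ^ (p - 1) * γ + δ ^ (p - 1) * γ ^ p) + p * δ ^ 2 * (γ ^ 2 * c) := by
    linear_combination hc - γ ^ p * hpow
  have hsplit : δ ^ (p + 1) = δ ^ (p - 1) * δ ^ 2 := by
    rw [← pow_add]
    have := hp.one_le
    congr 1
    omega
  rw [this]
  exact dvd_add (pow_succ' δ p ▸ mul_dvd_mul_left δ hlinear)
    (hsplit ▸ (mul_dvd_mul hp_dvd dvd_rfl).mul_right _)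

namespace IsPrimitiveRoot

variable {K : Type*} [Field K] {p : ℕ} [Fact p.Prime] {ζ : 𝓞 K}

theorem sub_one_pow_pred_dvd_of_ringOfIntegers [CharZero K] (hζ : IsPrimitiveRoot ζ p) :
    (ζ - 1) ^ (p - 1) ∣ (p : 𝓞 K) :=
  (IsCyclotomicExtension.Rat.associated_zeta_sub_one_pow_prime p
    (hζ.map_of_injective NumberField.RingOfIntegers.coe_injective)).dvd

variable [NumberField K] [IsCyclotomicExtension {p} ℚ K]

theorem prime_sub_one_of_ringOfIntegers (hζ : IsPrimitiveRoot ζ p) : Prime (ζ - 1) :=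
  (hζ.map_of_injective NumberField.RingOfIntegers.coe_injective).zeta_sub_one_prime'

theorem sub_one_dvd_pow_sub_self_of_ringOfIntegers (hζ : IsPrimitiveRoot ζ p) (x : 𝓞 K) :
    ζ - 1 ∣ x ^ p - x := by
  have : IsCyclotomicExtension {p ^ (0 + 1)} ℚ K := by simpa
  have hζK : IsPrimitiveRoot (ζ : K) (p ^ (0 + 1)) := by
    simpa using hζ.map_of_injective NumberField.RingOfIntegers.coe_injective
  have : Finite (𝓞 K ⧸ Ideal.span {ζ - 1}) := hζK.finite_quotient_span_sub_one
  have hcard : Nat.card (𝓞 K ⧸ Ideal.span {ζ - 1}) = p := by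
    rw [← Submodule.cardQuot_apply, ← Ideal.absNorm_apply]
    exact IsCyclotomicExtension.Rat.absNorm_span_zeta_sub_one p 0 hζK
  simpa only [hcard] using (prime_sub_one_of_ringOfIntegers hζ).dvd_pow_card_quotient_sub_self x

end IsPrimitiveRoot

theorem stmt_0_general (p : ℕ+) (hp : (p : ℕ).Prime)
    (K : Type) [Field K] [NumberField K] [IsCyclotomicExtension {(p : ℕ)} ℚ K]
    (ζ : 𝓞 K) (hζ : IsPrimitiveRoot ζ p)
    (α β : 𝓞 K)
    (hα : α ∉ Ideal.span {1 - ζ})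
    (hαβ : α - β ∈ Ideal.span {1 - ζ}) :
    α ^ (p : ℕ) - β ^ (p : ℕ) ∈ (Ideal.span {1 - ζ} : Ideal (𝓞 K)) ^ ((p : ℕ) + 1) := by
  have := Fact.mk hp
  rw [← neg_sub ζ 1, Ideal.span_singleton_neg, Ideal.mem_span_singleton] at hα hαβ
  rw [← neg_sub ζ 1, Ideal.span_singleton_neg, Ideal.span_singleton_pow,
    Ideal.mem_span_singleton]
  exact pow_succ_dvd_pow_sub_pow hp hζ.prime_sub_one_of_ringOfIntegers
    (hζ.sub_one_pow_dvd_natCast_add hp hζ.sub_one_pow_pred_dvd_of_ringOfIntegers)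
    hζ.sub_one_dvd_pow_sub_self_of_ringOfIntegers hα hαβ

/-- Let `p` be an odd prime, `ζ` a primitive `p`-th root of unity, `K = ℚ(ζ)`,
`O_K = ℤ[ζ]`, and `π = (1-ζ)O_K`. If `α, β ∈ O_K` with `α ≢ 0 mod π` and
`α ≡ β mod π`, then `α^p ≡ β^p mod π^(p+1)`. -/
theorem stmt_0 (p : ℕ+) (hp : (p : ℕ).Prime) (hodd : Odd (p : ℕ))
    (K : Type) [Field K] [NumberField K] [IsCyclotomicExtension {(p : ℕ)} ℚ K]
    (ζ : 𝓞 K) (hζ : IsPrimitiveRoot ζ p)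
    (α β : 𝓞 K)
    (hα : α ∉ Ideal.span {1 - ζ})
    (hαβ : α - β ∈ Ideal.span {1 - ζ}) :
    α ^ (p : ℕ) - β ^ (p : ℕ) ∈ (Ideal.span {1 - ζ} : Ideal (𝓞 K)) ^ ((p : ℕ) + 1) :=
  stmt_0_general p hp K ζ hζ α β hα hαβ
end

section
/- Let p be an odd prime, ζ a primitive p-th root of unity, λ = ζ - 1, and π = λO_K the prime ideal above p. If α, β ∈ O_K with α ≢ 0 mod π and α ≡ β mod π, then there exists exactly one k with 0 ≤ k ≤ p-1 such that α - ζ^k β ≡ 0 mod π². -/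
open scoped NumberField

/-!
Write `λ = ζ - 1` and `α - β = λγ`. Since `ζ ^ k ≡ 1 + kλ mod λ²`, we get
`α - ζ ^ k β ≡ λ (γ - kβ) mod λ²`, so the condition on `k` is `γ ≡ kβ mod λ`. The residue field
`𝓞 K / λ` has characteristic `p`, and every class contains an integer because `𝓞 K = ℤ[ζ]` and
`ζ ≡ 1`; it is therefore `𝔽_p`, represented exactly once by `0, …, p - 1`. As `β` is a unit
modulo `λ`, `k` is the unique such representative of `γ / β`.
-/

theorem sub_one_sq_dvd_pow_sub_one_sub {R : Type*} [CommRing R] (ζ : R) (k : ℕ) :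
    (ζ - 1) ^ 2 ∣ ζ ^ k - 1 - k * (ζ - 1) := by
  induction k with
  | zero => simp
  | succ k ih =>
    obtain ⟨e, he⟩ := ih
    exact ⟨ζ * e + k, by push_cast; linear_combination ζ * he⟩

theorem sub_one_sq_dvd_sub_pow_mul_iff {R : Type*} [CommRing R] [IsDomain R] {ζ α β γ : R}
    (hζ : ζ ≠ 1) (h : α - β = (ζ - 1) * γ) (k : ℕ) :
    (ζ - 1) ^ 2 ∣ α - ζ ^ k * β ↔ ζ - 1 ∣ γ - k * β := by
  obtain ⟨e, he⟩ := sub_one_sq_dvd_pow_sub_one_sub ζ k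
  have key : α - ζ ^ k * β = (ζ - 1) * (γ - k * β) + (ζ - 1) ^ 2 * -(e * β) := by
    linear_combination h - β * he
  rw [key, dvd_add_left (dvd_mul_right _ _), sq,
    mul_dvd_mul_iff_left (sub_ne_zero.mpr hζ)]

theorem existsUnique_lt_natCast_eq {F : Type*} [Ring F] (p : ℕ) [NeZero p] [CharP F p]
    (hF : Function.Surjective (Int.cast : ℤ → F)) (x : F) : ∃! k : ℕ, k < p ∧ (k : F) = x := by
  obtain ⟨n, rfl⟩ := hF x
  refine ⟨(n : ZMod p).val, ⟨ZMod.val_lt _, by rw [ZMod.natCast_val, ZMod.cast_intCast']⟩, ?_⟩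
  rintro k ⟨hk, hkn⟩
  rw [← ZMod.cast_intCast' (R := F), ← ZMod.natCast_val, CharP.cast_eq_iff_mod_eq F p,
    Nat.mod_eq_of_lt hk, Nat.mod_eq_of_lt (ZMod.val_lt _)] at hkn
  exact hkn

theorem Ideal.intCast_quotient_surjective_of_adjoin_eq_top {R : Type*} [CommRing R] {x : R}
    (hx : Algebra.adjoin ℤ {x} = ⊤) {I : Ideal R} (hxI : x - 1 ∈ I) :
    Function.Surjective (Int.cast : ℤ → R ⧸ I) := by
  intro y
  obtain ⟨r, rfl⟩ := Ideal.Quotient.mk_surjective y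
  have hx1 : Ideal.Quotient.mk I x = 1 := by
    rwa [← map_one (Ideal.Quotient.mk I), Ideal.Quotient.eq]
  have hr : Ideal.Quotient.mkₐ ℤ I r ∈ (Algebra.adjoin ℤ {x}).map (Ideal.Quotient.mkₐ ℤ I) :=
    Subalgebra.mem_map.mpr ⟨r, hx ▸ Algebra.mem_top, rfl⟩
  rw [AlgHom.map_adjoin, Set.image_singleton, Ideal.Quotient.mkₐ_eq_mk, hx1,
    Algebra.adjoin_singleton_one] at hr
  obtain ⟨n, hn⟩ := Algebra.mem_bot.mp hr
  exact ⟨n, by simpa using hn⟩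

open NumberField

section RingOfIntegers

variable {p : ℕ} [Fact p.Prime] {K : Type*} [Field K] [NumberField K]
  [IsCyclotomicExtension {p} ℚ K] {ζ : 𝓞 K}

theorem prime_zeta_sub_one (hζ : IsPrimitiveRoot ζ p) : Prime (ζ - 1) :=
  (hζ.map_of_injective RingOfIntegers.coe_injective).zeta_sub_one_prime'

theorem charP_quotient_span_zeta_sub_one (hζ : IsPrimitiveRoot ζ p) :
    CharP (𝓞 K ⧸ Ideal.span {ζ - 1}) p where
  cast_eq_zero_iff n := by
    rw [← map_natCast (Ideal.Quotient.mk _), Ideal.Quotient.eq_zero_iff_mem,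
      Ideal.mem_span_singleton, ← Int.cast_natCast, ← Int.natCast_dvd_natCast]
    exact IsCyclotomicExtension.Rat.zeta_sub_one_dvd_intCast_iff' p
      (hζ.map_of_injective RingOfIntegers.coe_injective)

theorem intCast_surjective_quotient_span_zeta_sub_one (hζ : IsPrimitiveRoot ζ p) :
    Function.Surjective (Int.cast : ℤ → 𝓞 K ⧸ Ideal.span {ζ - 1}) :=
  Ideal.intCast_quotient_surjective_of_adjoin_eq_top
    (IsCyclotomicExtension.Rat.adjoin_singleton_eq_top
      (hζ.map_of_injective RingOfIntegers.coe_injective))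
    (Ideal.mem_span_singleton_self _)

theorem existsUnique_lt_zeta_sub_one_dvd_sub_natCast_mul (hζ : IsPrimitiveRoot ζ p) {β : 𝓞 K}
    (hβ : ¬ζ - 1 ∣ β) (γ : 𝓞 K) : ∃! k : ℕ, k < p ∧ ζ - 1 ∣ γ - k * β := by
  set I := Ideal.span {ζ - 1}
  have hprime := prime_zeta_sub_one hζ
  have : I.IsMaximal := ((Ideal.span_singleton_prime hprime.ne_zero).mpr hprime).isMaximal
    (by simpa [I] using hprime.ne_zero)
  let := Ideal.Quotient.field I
  have := charP_quotient_span_zeta_sub_one hζ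
  have hβ' : Ideal.Quotient.mk I β ≠ 0 := by
    rwa [Ne, Ideal.Quotient.eq_zero_iff_mem, Ideal.mem_span_singleton]
  refine (existsUnique_congr fun k => ?_).mpr <|
    existsUnique_lt_natCast_eq p (intCast_surjective_quotient_span_zeta_sub_one hζ)
      (Ideal.Quotient.mk I γ / Ideal.Quotient.mk I β)
  rw [eq_div_iff hβ', ← Ideal.mem_span_singleton, ← Ideal.Quotient.eq_zero_iff_mem, map_sub,
    map_mul, map_natCast, sub_eq_zero, eq_comm]

end RingOfIntegers

theorem stmt_1_general (p : ℕ+) (hp : (p : ℕ).Prime)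
    (K : Type) [Field K] [NumberField K] [IsCyclotomicExtension {(p : ℕ)} ℚ K]
    (ζ : 𝓞 K) (hζ : IsPrimitiveRoot ζ p)
    (α β : 𝓞 K)
    (hα : α ∉ Ideal.span {1 - ζ})
    (hαβ : α - β ∈ Ideal.span {1 - ζ}) :
    ∃! k : ℕ, k ≤ (p : ℕ) - 1 ∧
      α - ζ ^ k * β ∈ (Ideal.span {1 - ζ} : Ideal (𝓞 K)) ^ 2 := by
  have : Fact (p : ℕ).Prime := ⟨hp⟩
  have hspan : Ideal.span {1 - ζ} = Ideal.span {ζ - 1} := by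
    rw [← neg_sub, Ideal.span_singleton_neg]
  rw [hspan, Ideal.mem_span_singleton] at hα hαβ
  obtain ⟨γ, hγ⟩ := hαβ
  have hβ : ¬ζ - 1 ∣ β := fun hβ => hα (by simpa using dvd_add hβ ⟨γ, hγ⟩)
  refine (existsUnique_congr fun k => ?_).mpr
    (existsUnique_lt_zeta_sub_one_dvd_sub_natCast_mul hζ hβ γ)
  rw [hspan, Ideal.span_singleton_pow, Ideal.mem_span_singleton,
    sub_one_sq_dvd_sub_pow_mul_iff (hζ.ne_one hp.one_lt) hγ, Nat.le_sub_one_iff_lt hp.pos]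

/-- If `α, β ∈ O_K` with `α ≢ 0 mod π` and `α ≡ β mod π`, then there exists exactly one
`k` with `0 ≤ k ≤ p-1` such that `α - ζ^k β ≡ 0 mod π²`. -/
theorem stmt_1 (p : ℕ+) (hp : (p : ℕ).Prime) (hodd : Odd (p : ℕ))
    (K : Type) [Field K] [NumberField K] [IsCyclotomicExtension {(p : ℕ)} ℚ K]
    (ζ : 𝓞 K) (hζ : IsPrimitiveRoot ζ p)
    (α β : 𝓞 K)
    (hα : α ∉ Ideal.span {1 - ζ})
    (hαβ : α - β ∈ Ideal.span {1 - ζ}) :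
    ∃! k : ℕ, k ≤ (p : ℕ) - 1 ∧
      α - ζ ^ k * β ∈ (Ideal.span {1 - ζ} : Ideal (𝓞 K)) ^ 2 :=
  stmt_1_general p hp K ζ hζ α β hα hαβ
end

section
/- Let p be an odd prime, K = ℚ(ζ) the p-th cyclotomic field with complex conjugation denoted by bar, and π = (1-ζ)O_K. If C ∈ K satisfies C·C̄ = 1 and C ≡ 1 mod π with C ≠ 1, then the π-adic valuation v_π(C - 1) is odd. -/
/-!
Put `x = C - 1`. From `C * C̄ = 1` we get `x + x̄ = -x * x̄`, so `v_π(x + x̄) = 2 v_π(x)`.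
Conjugation maps `1 - ζ` to an associate, so it preserves `v_π`, and it fixes `ζ` modulo `π`,
hence acts trivially on `O_K / π`. If `v_π(x) = 2m` were even, write `x = s^m u` with the real
element `s = (1 - ζ)(1 - ζ⁻¹)` of valuation `2` and a `π`-unit `u`; then `x̄ - x = s^m (ū - u)`
has valuation `> v_π(x)`, and since `2` is a `π`-unit (`p` odd), `x + x̄ = 2x + (x̄ - x)` has
valuation exactly `v_π(x)`. Hence `v_π(x) = 0`, contradicting `C ≡ 1 mod π`.
-/

open scoped NumberField
open IsDedekindDomain IsDedekindDomain.HeightOneSpectrum WithZero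

namespace IsDedekindDomain.HeightOneSpectrum

variable {R : Type*} [CommRing R] [IsDedekindDomain R] (v : HeightOneSpectrum R)

theorem intValuation_map_eq_of_associated (σ : R ≃+* R) {π : R}
    (hv : v.asIdeal = Ideal.span {π}) (hσπ : Associated (σ π) π) (r : R) :
    v.intValuation (σ r) = v.intValuation r := by
  rcases eq_or_ne r 0 with rfl | hr
  · rw [map_zero]
  have hσr : σ r ≠ 0 := (map_ne_zero_iff σ σ.injective).mpr hr
  rw [intValuation_eq_exp_neg_multiplicity v hr, intValuation_eq_exp_neg_multiplicity v hσr, hv]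
  congr 3
  apply multiplicity_eq_of_emultiplicity_eq
  refine emultiplicity_eq_emultiplicity_iff.mpr fun n ↦ ?_
  rw [Ideal.span_singleton_pow, Ideal.dvd_span_singleton, Ideal.dvd_span_singleton,
    Ideal.mem_span_singleton, Ideal.mem_span_singleton, ← (hσπ.pow_pow (n := n)).dvd_iff_dvd_left,
    ← map_pow, map_dvd_iff]

variable {K : Type*} [Field K] [Algebra R K] [IsFractionRing R K]
  {F : Type*} [FunLike F K K] [RingHomClass F K K]

theorem valuation_map_eq_of_associated (σ : R ≃+* R) (τ : F)
    (hτ : ∀ a, τ (algebraMap R K a) = algebraMap R K (σ a)) {π : R}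
    (hv : v.asIdeal = Ideal.span {π}) (hσπ : Associated (σ π) π) (y : K) :
    v.valuation K (τ y) = v.valuation K y := by
  obtain ⟨a, b, -, rfl⟩ := IsFractionRing.div_surjective (A := R) y
  simp only [map_div₀, hτ, valuation_of_algebraMap, intValuation_map_eq_of_associated v σ hv hσπ]

theorem valuation_map_sub_lt_one (τ : F) (hτv : ∀ y, v.valuation K (τ y) = v.valuation K y)
    (hτR : ∀ a : R, v.valuation K (τ (algebraMap R K a) - algebraMap R K a) < 1)
    {y : K} (hy : v.valuation K y ≤ 1) : v.valuation K (τ y - y) < 1 := by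
  obtain ⟨a, ha⟩ := exists_valuation_sub_lt_of_integer v hy 1
  have hsplit : τ y - y = (τ (algebraMap R K a) - algebraMap R K a)
      - τ (algebraMap R K a - y) + (algebraMap R K a - y) := by
    rw [map_sub]; ring
  rw [hsplit]
  refine Valuation.map_add_lt _ (Valuation.map_sub_lt _ (hτR a) ?_) ha
  rw [hτv]; exact ha

end IsDedekindDomain.HeightOneSpectrum

namespace Valuation

variable {K Γ₀ : Type*} [Field K] [LinearOrderedCommGroupWithZero Γ₀] (w : Valuation K Γ₀)

theorem map_sub_lt_of_map_eq_map_fixed {F : Type*} [FunLike F K K] [RingHomClass F K K]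
    (τ : F) (hτ : ∀ u, w u ≤ 1 → w (τ u - u) < 1) {s x : K} (hs : τ s = s) (hs0 : s ≠ 0)
    (hx : w x = w s) : w (τ x - x) < w x := by
  have hu : w (x / s) = 1 := by rw [map_div₀, hx, div_self ((w.ne_zero_iff).mpr hs0)]
  have hsplit : τ x - x = s * (τ (x / s) - x / s) := by
    rw [map_div₀, hs]; field_simp
  rw [hsplit, map_mul, hx]
  exact mul_lt_of_lt_one_right (w.pos_iff.mpr hs0) (hτ _ hu.le)

theorem map_add_eq_of_map_sub_lt (h2 : w 2 = 1) {x y : K} (h : w (y - x) < w x) :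
    w (x + y) = w x := by
  rw [show x + y = 2 * x + (y - x) by ring, map_add_eq_of_lt_left, map_mul, h2, one_mul]
  rwa [map_mul, h2, one_mul]

end Valuation

theorem Algebra.map_sub_self_mem_of_adjoin_eq_top {A : Type*} [CommRing A] {ζ : A}
    (hζ : Algebra.adjoin ℤ {ζ} = ⊤) (σ : A →+* A) {I : Ideal A} (h : σ ζ - ζ ∈ I) (a : A) :
    σ a - a ∈ I := by
  have hmod : (Ideal.Quotient.mkₐ ℤ I).comp σ.toIntAlgHom = Ideal.Quotient.mkₐ ℤ I := by
    refine AlgHom.ext_of_adjoin_eq_top hζ ?_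
    rintro _ rfl
    exact Ideal.Quotient.eq.mpr h
  exact Ideal.Quotient.eq.mp (AlgHom.congr_fun hmod a)

namespace NumberField

variable {K : Type*} [Field K] [NumberField K] (conj : K ≃ₐ[ℚ] K) {ζ : 𝓞 K}

local notation "σ" => galRestrict ℤ ℚ K (𝓞 K) conj

theorem galRestrict_apply_mul_self_eq_one (hζ0 : ζ ≠ 0) (hconj : conj (ζ : K) = (ζ : K)⁻¹) :
    σ ζ * ζ = 1 := by
  apply RingOfIntegers.coe_injective
  rw [map_mul, map_one, algebraMap_galRestrict_apply, ← RingOfIntegers.coe_eq_algebraMap, hconj]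
  exact inv_mul_cancel₀ (by exact_mod_cast hζ0)

theorem associated_galRestrict_one_sub (hσζ : σ ζ * ζ = 1) :
    Associated (σ (1 - ζ)) (1 - ζ) := by
  refine Associated.symm ⟨⟨-σ ζ, -ζ, by simpa using hσζ, by simpa [mul_comm] using hσζ⟩, ?_⟩
  simp only [map_sub, map_one]
  linear_combination hσζ

theorem galRestrict_sub_self_mem (hζtop : Algebra.adjoin ℤ {ζ} = ⊤) (hσζ : σ ζ * ζ = 1)
    (a : 𝓞 K) : σ a - a ∈ Ideal.span {1 - ζ} := by
  refine Algebra.map_sub_self_mem_of_adjoin_eq_top hζtop (σ : 𝓞 K →+* 𝓞 K) ?_ a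
  change σ ζ - ζ ∈ _
  exact Ideal.mem_span_singleton.mpr ⟨σ ζ * (1 + ζ), by linear_combination ζ * hσζ⟩
variable (v : HeightOneSpectrum (𝓞 K))

theorem valuation_conj_eq (hσζ : σ ζ * ζ = 1) (hv : v.asIdeal = Ideal.span {1 - ζ}) (y : K) :
    v.valuation K (conj y) = v.valuation K y :=
  v.valuation_map_eq_of_associated (σ : 𝓞 K ≃+* 𝓞 K) conj
    (fun a ↦ (algebraMap_galRestrict_apply ℤ conj a).symm) hv
    (associated_galRestrict_one_sub conj hσζ) y

theorem valuation_conj_sub_lt_one (hζtop : Algebra.adjoin ℤ {ζ} = ⊤) (hσζ : σ ζ * ζ = 1)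
    (hv : v.asIdeal = Ideal.span {1 - ζ}) {y : K} (hy : v.valuation K y ≤ 1) :
    v.valuation K (conj y - y) < 1 := by
  refine v.valuation_map_sub_lt_one conj (valuation_conj_eq conj v hσζ hv) (fun a ↦ ?_) hy
  rw [← algebraMap_galRestrict_apply ℤ conj a, ← map_sub, valuation_lt_one_iff_mem, hv]
  exact galRestrict_sub_self_mem conj hζtop hσζ a

theorem valuation_one_sub_eq (hζ1 : ζ ≠ 1) (hv : v.asIdeal = Ideal.span {1 - ζ}) :
    v.valuation K (1 - ζ) = exp (-1) := by
  rw [RingOfIntegers.coe_eq_algebraMap, ← map_one (algebraMap (𝓞 K) K), ← map_sub,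
    valuation_of_algebraMap, v.intValuation_singleton (sub_ne_zero.mpr hζ1.symm) hv]

theorem valuation_two_eq_one (p : ℕ) [Fact p.Prime] [IsCyclotomicExtension {p} ℚ K]
    (hζ : IsPrimitiveRoot ζ p) (hp2 : 2 < p) (hv : v.asIdeal = Ideal.span {1 - ζ}) :
    v.valuation K 2 = 1 := by
  have hζK : IsPrimitiveRoot (ζ : K) p := hζ.map_of_injective RingOfIntegers.coe_injective
  have h2 := IsCyclotomicExtension.Rat.two_not_mem_span_zeta_sub_one' p hζK hp2
  rw [show hζK.toInteger - 1 = -(1 - ζ) by ext; simp, Ideal.span_singleton_neg, ← hv] at h2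
  rw [← map_ofNat (algebraMap (𝓞 K) K), valuation_eq_one_iff_notMem]
  exact h2

theorem conj_one_sub_mul_one_sub_inv (hconj : conj (ζ : K) = (ζ : K)⁻¹) :
    conj ((1 - ζ) * (1 - (ζ : K)⁻¹)) = (1 - ζ) * (1 - (ζ : K)⁻¹) := by
  simp only [map_mul, map_sub, map_one, map_inv₀, hconj, inv_inv]
  ring

theorem valuation_one_sub_mul_one_sub_inv (hconj : conj (ζ : K) = (ζ : K)⁻¹)
    (hσζ : σ ζ * ζ = 1) (hζ1 : ζ ≠ 1) (hv : v.asIdeal = Ideal.span {1 - ζ}) :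
    v.valuation K ((1 - ζ) * (1 - (ζ : K)⁻¹)) = exp (-2) := by
  have hinv : 1 - (ζ : K)⁻¹ = conj (1 - ζ) := by rw [map_sub, map_one, hconj]
  rw [hinv, Valuation.map_mul, valuation_conj_eq conj v hσζ hv, valuation_one_sub_eq v hζ1 hv,
    ← exp_add]
  norm_num

theorem valuation_add_conj_eq_of_even (p : ℕ) [Fact p.Prime] [IsCyclotomicExtension {p} ℚ K]
    (hζ : IsPrimitiveRoot ζ p) (hp2 : 2 < p) (hconj : conj (ζ : K) = (ζ : K)⁻¹)
    (hv : v.asIdeal = Ideal.span {1 - ζ}) {x : K} {m : ℕ}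
    (hx : v.valuation K x = exp (-(2 * m : ℤ))) :
    v.valuation K (x + conj x) = v.valuation K x := by
  have hσζ := galRestrict_apply_mul_self_eq_one conj (hζ.ne_zero (by omega)) hconj
  set s : K := (1 - ζ) * (1 - (ζ : K)⁻¹)
  have hs : v.valuation K s = exp (-2) :=
    valuation_one_sub_mul_one_sub_inv conj v hconj hσζ (hζ.ne_one (by omega)) hv
  have hs0 : s ≠ 0 := (Valuation.ne_zero_iff _).mp (by rw [hs]; exact exp_ne_zero)
  have hxs : v.valuation K x = v.valuation K (s ^ m) := by
    rw [hx, map_pow, hs, ← exp_nsmul, nsmul_eq_mul]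
    congr 1
    ring
  have hlt := (v.valuation K).map_sub_lt_of_map_eq_map_fixed conj
    (fun u hu ↦ valuation_conj_sub_lt_one conj v
      (IsCyclotomicExtension.adjoin_primitive_root_eq_top hζ) hσζ hv hu)
    (by rw [map_pow, conj_one_sub_mul_one_sub_inv conj hconj]) (pow_ne_zero m hs0) hxs
  exact (v.valuation K).map_add_eq_of_map_sub_lt (valuation_two_eq_one v p hζ hp2 hv) hlt

end NumberField

open NumberField

/-- If `C ∈ K` satisfies `C·C̄ = 1` and `C ≡ 1 mod π` with `C ≠ 1`, then the `π`-adic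
valuation `v_π(C - 1)` is odd.  Here `v` is the height-one prime corresponding to
`π = (1-ζ)O_K` and `v_π(x) = n` is expressed as `v.valuation x = ofAdd (-n)`. -/
theorem stmt_4 (p : ℕ+) (hp : (p : ℕ).Prime) (hodd : Odd (p : ℕ))
    (K : Type) [Field K] [NumberField K] [IsCyclotomicExtension {(p : ℕ)} ℚ K]
    (ζ : 𝓞 K) (hζ : IsPrimitiveRoot ζ p)
    (v : IsDedekindDomain.HeightOneSpectrum (𝓞 K))
    (hv : v.asIdeal = Ideal.span {1 - ζ})
    (conj : K ≃ₐ[ℚ] K) (hconj : conj (ζ : K) = (ζ : K)⁻¹)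
    (C : K) (hC : C * conj C = 1)
    (hC1 : v.valuation K (C - 1) ≤ ((Multiplicative.ofAdd (-1 : ℤ) : Multiplicative ℤ) : WithZero (Multiplicative ℤ)))
    (hne : C ≠ 1) :
    ∃ n : ℕ, Odd n ∧
      v.valuation K (C - 1) = ((Multiplicative.ofAdd (-(n : ℤ)) : Multiplicative ℤ) : WithZero (Multiplicative ℤ)) := by
  have : Fact (p : ℕ).Prime := ⟨hp⟩
  have hσζ := galRestrict_apply_mul_self_eq_one conj (hζ.ne_zero p.ne_zero) hconj
  have hp2 : 2 < (p : ℕ) := hp.two_le.lt_of_ne fun h ↦ by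
    rw [← h] at hodd; exact Nat.not_odd_iff_even.mpr even_two hodd
  set w := v.valuation K
  set x := C - 1
  have hx0 : w x ≠ 0 := (Valuation.ne_zero_iff _).mpr (sub_ne_zero.mpr hne)
  have hx1 : w x < 1 := hC1.trans_lt (by rw [← exp_zero]; exact exp_lt_exp.mpr (by norm_num))
  have hsum : w (x + conj x) = w x * w x := by
    have hx : x + conj x = -(x * conj x) := by
      simp only [x, map_sub, map_one]; linear_combination hC
    rw [hx, Valuation.map_neg, Valuation.map_mul, valuation_conj_eq conj v hσζ hv]
  obtain ⟨k, hk⟩ : ∃ k : ℤ, w x = exp k := ⟨log (w x), (exp_log hx0).symm⟩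
  have hk1 : k ≤ -1 := exp_le_exp.mp (hk ▸ hC1)
  refine ⟨(-k).toNat, Nat.not_even_iff_odd.mp fun ⟨m, hm⟩ ↦ ?_, by rw [hk]; congr; omega⟩
  have heven := valuation_add_conj_eq_of_even conj v p hζ hp2 hconj hv (x := x) (m := m)
    (by rw [hk]; congr 1; omega)
  rw [hsum] at heven
  exact hx1.ne (mul_eq_left₀ hx0 |>.mp heven)
end

section
/- Let p be an odd prime, K the p-th cyclotomic field, σ a generator of Gal(K/ℚ), and μ ∈ ℤ with μ ≢ 0 mod p. If B ∈ K* satisfies B^((σ-μ)²) ∈ K*^p (i.e., σ²(B)·σ(B)^(-2μ)·B^(μ²) is a p-th power in K), then already B^(σ-μ) ∈ K*^p, i.e., σ(B)·B^(-μ) is a p-th power in K. -/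
/-!
Write `K*` additively modulo `p`-th powers, where it is an `𝔽_p`-vector space on which `σ` acts
linearly, and put `d = (σ - μ) B`. The hypothesis says `σ d = μ d`; together with `σ B = μ B + d`
this gives `σ^k B = μ^k B + k μ^(k-1) d`. For `k = p - 1` we have `σ^k = 1` and `μ^k ≡ 1`, so
`(p - 1) μ^(p-2) d = 0`, and that coefficient is a unit mod `p`.
-/

namespace MonoidHom

variable {G : Type*} [CommGroup G] (S : G →* G)

theorem iterate_apply_eq_zpow_mul_zpow {μ : ℤ} {b d : G} (hb : S b = b ^ μ * d)
    (hd : S d = d ^ μ) : ∀ k : ℕ, S^[k] b = b ^ μ ^ k * d ^ (k * μ ^ (k - 1))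
  | 0 => by simp
  | k + 1 => by
    have hexp : μ ^ k + μ * (k * μ ^ (k - 1)) = (k + 1 : ℕ) * μ ^ k := by
      rcases k with _ | k
      · simp
      · push_cast; ring
    rw [Function.iterate_succ_apply', iterate_apply_eq_zpow_mul_zpow hb hd k, map_mul, map_zpow,
      map_zpow, hb, hd, mul_zpow, ← zpow_mul, ← zpow_mul, mul_assoc, ← zpow_add, hexp, pow_succ',
      Nat.add_sub_cancel]

theorem eq_one_of_apply_eq_zpow_mul {p q : ℕ} (hp : p.Prime) (hexp : ∀ x : G, x ^ p = 1)
    {μ : ℤ} (hμ : ¬ (p : ℤ) ∣ μ) (hqp : ¬ (p : ℤ) ∣ q) (hμq : μ ^ q ≡ 1 [ZMOD p]) {b d : G}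
    (hbq : S^[q] b = b) (hb : S b = b ^ μ * d) (hd : S d = d ^ μ) : d = 1 := by
  have hord : ∀ x : G, orderOf x ∣ p := fun x => orderOf_dvd_of_pow_eq_one (hexp x)
  have hbμ : b ^ μ ^ q = b := by
    conv_rhs => rw [← zpow_one b]
    exact zpow_eq_zpow_iff_modEq.mpr (hμq.of_dvd (Int.natCast_dvd_natCast.mpr (hord b)))
  have hdn : d ^ ((q : ℤ) * μ ^ (q - 1)) = 1 := by
    have := S.iterate_apply_eq_zpow_mul_zpow hb hd q
    rwa [hbq, hbμ, left_eq_mul] at this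
  rcases (Nat.dvd_prime hp).mp (hord d) with hd1 | hdp
  · exact orderOf_eq_one_iff.mp hd1
  · have hpZ : Prime (p : ℤ) := Nat.prime_iff_prime_int.mp hp
    rw [← orderOf_dvd_iff_zpow_eq_one, hdp] at hdn
    rcases hpZ.dvd_mul.mp hdn with hq | hμ'
    · exact absurd hq hqp
    · exact absurd (hpZ.dvd_of_dvd_pow hμ') hμ

theorem apply_mul_zpow_neg_mem_range_powMonoidHom {p q : ℕ} (hp : p.Prime) {μ : ℤ}
    (hμ : ¬ (p : ℤ) ∣ μ) (hqp : ¬ (p : ℤ) ∣ q) (hμq : μ ^ q ≡ 1 [ZMOD p]) {b : G} (hbq : S^[q] b = b)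
    (h : S (S b) * S b ^ (-(2 * μ)) * b ^ (μ ^ 2) ∈ (powMonoidHom p).range) :
    S b * b ^ (-μ) ∈ (powMonoidHom p).range := by
  set H := (powMonoidHom p : G →* G).range
  have hH : H ≤ H.comap S := by
    rintro _ ⟨x, rfl⟩
    exact ⟨S x, (map_pow S x p).symm⟩
  set T := QuotientGroup.map H H S hH
  have hT : Function.Semiconj ((↑) : G → G ⧸ H) S T := fun _ => rfl
  rw [← QuotientGroup.eq_one_iff]
  refine T.eq_one_of_apply_eq_zpow_mul hp ?_ hμ hqp hμq (b := (b : G ⧸ H))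
    ((hT.iterate_right q b).symm.trans (congrArg _ hbq)) ?_ ?_
  · refine fun x => QuotientGroup.induction_on x fun x => ?_
    rw [← QuotientGroup.mk_pow, QuotientGroup.eq_one_iff]
    exact ⟨x, rfl⟩
  · rw [← hT, ← QuotientGroup.mk_zpow, ← QuotientGroup.mk_mul]
    congr 1
    rw [zpow_neg, mul_inv_cancel_comm_assoc]
  · rw [← hT, ← QuotientGroup.mk_zpow, eq_comm, QuotientGroup.eq]
    convert h using 1
    simp only [map_mul, map_zpow, mul_zpow, ← zpow_mul, mul_inv, ← zpow_neg]
    rw [show -(-μ * μ) = μ ^ 2 by ring, show -(2 * μ) = -μ + -μ by ring, zpow_add]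
    ac_rfl

end MonoidHom

theorem IsCyclotomicExtension.card_aut_rat_prime {p : ℕ} (hp : p.Prime) (K : Type*) [Field K]
    [CharZero K] [IsCyclotomicExtension {p} ℚ K] : Nat.card (K ≃ₐ[ℚ] K) = p - 1 := by
  have : NeZero p := ⟨hp.ne_zero⟩
  have : IsGalois ℚ K := IsCyclotomicExtension.isGalois {p} ℚ K
  have : FiniteDimensional ℚ K := IsCyclotomicExtension.finiteDimensional {p} ℚ K
  rw [IsGalois.card_aut_eq_finrank,
    IsCyclotomicExtension.finrank K (Polynomial.cyclotomic.irreducible_rat hp.pos),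
    Nat.totient_prime hp]

theorem stmt_6_general (p : ℕ+) (hp : (p : ℕ).Prime)
    (K : Type) [Field K] [NumberField K] [IsCyclotomicExtension {(p : ℕ)} ℚ K]
    (σ : K ≃ₐ[ℚ] K)
    (μ : ℤ) (hμ : ¬ ((p : ℕ) : ℤ) ∣ μ)
    (B : K) (hB : B ≠ 0)
    (h : ∃ c : K, σ (σ B) * (σ B) ^ (-(2 * μ)) * B ^ (μ ^ 2) = c ^ (p : ℕ)) :
    ∃ c : K, σ B * B ^ (-μ) = c ^ (p : ℕ) := by
  obtain ⟨c, hc⟩ := h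
  have hc0 : c ≠ 0 := by
    rintro rfl
    rw [zero_pow hp.ne_zero] at hc
    exact mul_ne_zero (mul_ne_zero (by simpa) (zpow_ne_zero _ (by simpa))) (zpow_ne_zero _ hB) hc
  set S : Kˣ →* Kˣ := Units.map σ
  have hS : Function.Semiconj ((↑) : Kˣ → K) S σ := fun _ => rfl
  have hσ : σ ^ ((p : ℕ) - 1) = 1 := by
    rw [← IsCyclotomicExtension.card_aut_rat_prime hp K]
    exact pow_card_eq_one'
  have hFermat : μ ^ ((p : ℕ) - 1) ≡ 1 [ZMOD p] :=
    Int.ModEq.pow_card_sub_one_eq_one hp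
      ((Nat.prime_iff_prime_int.mp hp).coprime_iff_not_dvd.mpr hμ).symm
  have hqp : ¬ ((p : ℕ) : ℤ) ∣ ((p : ℕ) - 1 : ℕ) := by
    rw [Int.natCast_dvd_natCast]
    exact Nat.not_dvd_of_pos_of_lt (Nat.sub_pos_of_lt hp.one_lt) (Nat.sub_lt hp.pos one_pos)
  obtain ⟨e, he⟩ := S.apply_mul_zpow_neg_mem_range_powMonoidHom hp hμ hqp hFermat
    (b := Units.mk0 B hB) (Units.ext <| by rw [hS.iterate_right, ← AlgEquiv.coe_pow, hσ]; rfl)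
    ⟨Units.mk0 c hc0, Units.ext <| by simpa [S] using hc.symm⟩
  exact ⟨e, by simpa [S] using (congrArg Units.val he).symm⟩

/-- If `B ∈ K*` satisfies `B^((σ-μ)²) ∈ K*^p`, i.e. `σ²(B)·σ(B)^(-2μ)·B^(μ²)` is a `p`-th
power, then already `B^(σ-μ) = σ(B)·B^(-μ)` is a `p`-th power in `K`. -/
theorem stmt_6 (p : ℕ+) (hp : (p : ℕ).Prime) (hodd : Odd (p : ℕ))
    (K : Type) [Field K] [NumberField K] [IsCyclotomicExtension {(p : ℕ)} ℚ K]
    (σ : K ≃ₐ[ℚ] K) (hgen : ∀ τ : K ≃ₐ[ℚ] K, τ ∈ Subgroup.zpowers σ)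
    (μ : ℤ) (hμ : ¬ ((p : ℕ) : ℤ) ∣ μ)
    (B : K) (hB : B ≠ 0)
    (h : ∃ c : K, σ (σ B) * (σ B) ^ (-(2 * μ)) * B ^ (μ ^ 2) = c ^ (p : ℕ)) :
    ∃ c : K, σ B * B ^ (-μ) = c ^ (p : ℕ) :=
  stmt_6_general p hp K σ μ hμ B hB h
end

section
/- Let p be an odd prime, ζ a primitive p-th root of unity, u a primitive root mod p, σ(ζ) = ζ^u, π = (1-ζ)O_K, μ ∈ ℤ with μ ≢ 0, 1 mod p. Suppose V = γ + γ₀ζ + γ₁ζ^(u₁) + ... + γ_(p-3)ζ^(u_(p-3)) with γ, γ_i ∈ ℤ and σ(V) ≡ μV mod p·O_K. Then γ ≡ -γ_(p-3)/(μ-1) mod p and γ_k ≡ -(μ^(-1) + μ^(-2) + ... + μ^(-(k+1)))·γ_(p-3) mod p for 0 ≤ k ≤ p-4. -/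
/-!
Since `u` is a primitive root mod `p`, the exponents `0` and `u ^ i % p` (`i < p - 1`) run over all
residues mod `p` exactly once. The only integral relation among `1, ζ, …, ζ ^ (p - 1)` is that
their sum vanishes (the first `p - 1` of them form a basis of `𝓞 K`), so an integral combination
of all `p`-th roots of unity lies in `p · 𝓞 K` exactly when its coefficients are congruent mod `p`.
As `σ` maps `ζ ^ (u ^ i)` to `ζ ^ (u ^ (i + 1))`, comparing the coefficients of `σ V - μ V` gives
`(1 - μ) γ ≡ -μ γ₀ ≡ γ_k - μ γ_(k+1) ≡ γ_(p-3)`, and this recurrence solves to the stated formulas.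
-/

open scoped NumberField
open Finset

theorem Module.Basis.dvd_repr_of_mem_span_algebraMap {ι R S : Type*} [CommRing R] [CommRing S]
    [Algebra R S] (b : Module.Basis ι R S) {m : R} {x : S}
    (hx : x ∈ Ideal.span {algebraMap R S m}) (i : ι) : m ∣ b.repr x i := by
  obtain ⟨w, rfl⟩ := Ideal.mem_span_singleton'.mp hx
  rw [mul_comm, ← Algebra.smul_def, map_smul, Finsupp.smul_apply, smul_eq_mul]
  exact dvd_mul_right m _

theorem pow_mod_injOn_range_of_orderOf_eq {p u : ℕ} (hu : orderOf (u : ZMod p) = p - 1) :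
    Set.InjOn (fun i => u ^ i % p) (range (p - 1)) := by
  intro i hi j hj hij
  have hcast : (u : ZMod p) ^ i = (u : ZMod p) ^ j := by
    simpa only [ZMod.natCast_mod, Nat.cast_pow] using congrArg (fun n : ℕ => (n : ZMod p)) hij
  exact pow_injOn_Iio_orderOf (by simpa [hu] using hi) (by simpa [hu] using hj) hcast

theorem pow_mod_ne_zero_of_orderOf_eq {p u : ℕ} [Fact p.Prime] (hu : orderOf (u : ZMod p) = p - 1)
    (i : ℕ) : u ^ i % p ≠ 0 := by
  have hu0 : (u : ZMod p) ≠ 0 := by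
    rintro h
    have h1 : (u : ZMod p) ^ (p - 1) = 1 := hu ▸ pow_orderOf_eq_one _
    rw [h, zero_pow (Nat.sub_ne_zero_of_lt (Fact.out : p.Prime).one_lt)] at h1
    exact zero_ne_one h1
  intro h
  apply pow_ne_zero i hu0
  simpa only [ZMod.natCast_mod, Nat.cast_pow, Nat.cast_zero] using
    congrArg (fun n : ℕ => (n : ZMod p)) h

theorem sum_Icc_one_pow_succ {R : Type*} [CommSemiring R] (y : R) (n : ℕ) :
    ∑ j ∈ Icc 1 (n + 1), y ^ j = y * ∑ j ∈ Icc 1 n, y ^ j + y := by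
  induction n with
  | zero => simp
  | succ n ih =>
    conv_lhs => rw [sum_Icc_succ_top (by omega), ih]
    rw [sum_Icc_succ_top (by omega)]
    ring

theorem eq_neg_sum_Icc_inv_pow_mul_of_sub_mul_eq {F : Type*} [Field F] {μ L : F} (hμ : μ ≠ 0)
    {x : ℕ → F} {N : ℕ} (h0 : -(μ * x 0) = L) (hstep : ∀ k < N, x k - μ * x (k + 1) = L) :
    ∀ k ≤ N, x k = -(∑ j ∈ Icc 1 (k + 1), μ⁻¹ ^ j) * L := by
  intro k hk
  induction k with
  | zero =>
    rw [← h0, zero_add, Icc_self, sum_singleton]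
    field_simp
  | succ k ih =>
    have hx : x (k + 1) = μ⁻¹ * (x k - L) := by
      rw [← hstep k (by omega)]
      field_simp
      ring
    rw [hx, ih (by omega), sum_Icc_one_pow_succ _ (k + 1)]
    ring

theorem map_pow_pow_mod {R F : Type*} [Monoid R] [FunLike F R R] [MonoidHomClass F R R] (σ : F)
    {ζ : R} {p u : ℕ} (hζ : ζ ^ p = 1) (hσ : σ ζ = ζ ^ u) (i : ℕ) :
    σ (ζ ^ (u ^ i % p)) = ζ ^ (u ^ (i + 1) % p) := by
  rw [map_pow, hσ, ← pow_mul, pow_eq_pow_mod _ hζ, Nat.mul_mod, Nat.mod_mod, ← Nat.mul_mod,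
    ← pow_succ', ← pow_eq_pow_mod _ hζ]

theorem map_sub_mul_eq_add_sum_pow_pow_mod {R F : Type*} [CommRing R] [FunLike F R R]
    [RingHomClass F R R] (σ : F) {ζ : R} {p u : ℕ} (hζ : ζ ^ p = 1) (hσ : σ ζ = ζ ^ u)
    (μ γ : ℤ) (g : ℕ → ℤ) (n : ℕ) {V : R}
    (hV : V = (γ : R) + ∑ i ∈ range n, (g i : R) * ζ ^ (u ^ i % p)) :
    σ V - μ * V = ((1 - μ) * γ : ℤ) + ∑ i ∈ range (n + 1),
      (((if i = 0 then 0 else g (i - 1)) - if i = n then 0 else μ * g i : ℤ) : R) *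
        ζ ^ (u ^ i % p) := by
  have hσV : σ V = γ + ∑ i ∈ range n, (g i : R) * ζ ^ (u ^ (i + 1) % p) := by
    simp only [hV, map_add, map_sum, map_mul, map_intCast, map_pow_pow_mod σ hζ hσ]
  have hshift : ∑ i ∈ range (n + 1), ((if i = 0 then 0 else g (i - 1) : ℤ) : R) * ζ ^ (u ^ i % p)
      = ∑ i ∈ range n, (g i : R) * ζ ^ (u ^ (i + 1) % p) := by
    simp [sum_range_succ']
  have htrunc : ∑ i ∈ range (n + 1), ((if i = n then 0 else μ * g i : ℤ) : R) * ζ ^ (u ^ i % p)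
      = μ * ∑ i ∈ range n, (g i : R) * ζ ^ (u ^ i % p) := by
    rw [sum_range_succ, if_pos rfl, Int.cast_zero, zero_mul, add_zero, mul_sum]
    refine sum_congr rfl fun i hi => ?_
    rw [if_neg (mem_range.mp hi).ne, Int.cast_mul, mul_assoc]
  rw [hσV, Int.cast_mul, Int.cast_sub, Int.cast_one]
  simp only [Int.cast_sub, sub_mul, sum_sub_distrib, hshift, htrunc, hV]
  ring

namespace IsPrimitiveRoot

variable {p : ℕ} {K : Type*} [Field K] [CharZero K] [IsCyclotomicExtension {p} ℚ K] {ζ : 𝓞 K}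

theorem dvd_coeff_of_sum_pow_mem_span (hp : p.Prime) (hζ : IsPrimitiveRoot ζ p) {a : ℕ → ℤ}
    (h : ∑ n ∈ range (p - 1), (a n : 𝓞 K) * ζ ^ n ∈ Ideal.span {(p : 𝓞 K)}) {n : ℕ}
    (hn : n < p - 1) : (p : ℤ) ∣ a n := by
  have : NeZero p := ⟨hp.ne_zero⟩
  have hζK : IsPrimitiveRoot (ζ : K) p :=
    hζ.map_of_injective NumberField.RingOfIntegers.coe_injective
  set B := hζK.integralPowerBasis
  have hgen : B.gen = ζ := hζK.integralPowerBasis_gen.trans hζK.toInteger_coe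
  have hdim : B.dim = p - 1 := by rw [hζK.integralPowerBasis_dim, Nat.totient_prime hp]
  have hsum : ∑ n ∈ range (p - 1), (a n : 𝓞 K) * ζ ^ n = ∑ i : Fin B.dim, a i • B.basis i := by
    rw [← hdim, ← Fin.sum_univ_eq_sum_range]
    refine sum_congr rfl fun i _ => ?_
    rw [B.coe_basis, hgen, zsmul_eq_mul]
  have hmem : ∑ i : Fin B.dim, a i • B.basis i ∈ Ideal.span {algebraMap ℤ (𝓞 K) p} := by
    rw [← hsum]
    simpa using h
  have hdvd := B.basis.dvd_repr_of_mem_span_algebraMap hmem ⟨n, hdim ▸ hn⟩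
  rwa [B.basis.repr_sum_self] at hdvd

theorem intCast_coeff_eq_of_sum_pow_mem_span (hp : p.Prime) (hζ : IsPrimitiveRoot ζ p)
    {b : ℕ → ℤ} (h : ∑ n ∈ range p, (b n : 𝓞 K) * ζ ^ n ∈ Ideal.span {(p : 𝓞 K)}) {n : ℕ}
    (hn : n < p) : (b n : ZMod p) = b (p - 1) := by
  -- subtracting `b (p - 1) • ∑ n ∈ range p, ζ ^ n = 0` leaves a combination of the power basis
  have hshift : ∑ n ∈ range (p - 1), ((b n - b (p - 1) : ℤ) : 𝓞 K) * ζ ^ n =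
      ∑ n ∈ range p, (b n : 𝓞 K) * ζ ^ n := by
    calc _ = ∑ n ∈ range p, ((b n - b (p - 1) : ℤ) : 𝓞 K) * ζ ^ n := by
          conv_rhs => rw [← Nat.sub_add_cancel hp.one_le, sum_range_succ]
          simp
      _ = _ := by
          simp only [Int.cast_sub, sub_mul, sum_sub_distrib, ← mul_sum,
            hζ.geom_sum_eq_zero hp.one_lt, mul_zero, sub_zero]
  rcases Nat.lt_or_ge n (p - 1) with hn' | hn'
  · rw [← sub_eq_zero, ← Int.cast_sub, ZMod.intCast_zmod_eq_zero_iff_dvd]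
    exact dvd_coeff_of_sum_pow_mem_span hp hζ (hshift ▸ h) hn'
  · rw [show n = p - 1 by omega]

theorem intCast_coeff_eq_of_sum_mem_span {ι : Type*} (hp : p.Prime) (hζ : IsPrimitiveRoot ζ p)
    {s : Finset ι} {e : ι → ℕ} (he : Set.InjOn e s) (hs : s.image e = range p) {b : ι → ℤ}
    (h : ∑ i ∈ s, (b i : 𝓞 K) * ζ ^ e i ∈ Ideal.span {(p : 𝓞 K)}) {i j : ι} (hi : i ∈ s)
    (hj : j ∈ s) : (b i : ZMod p) = b j := by
  classical
  set B : ℕ → ℤ := fun n => ∑ k ∈ s with e k = n, b k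
  have hB : ∀ k ∈ s, B (e k) = b k := fun k hk => by
    refine sum_eq_single_of_mem k (mem_filter.mpr ⟨hk, rfl⟩) fun l hl hlk => ?_
    exact absurd (he (mem_filter.mp hl).1 hk (mem_filter.mp hl).2) hlk
  have hsum : ∑ n ∈ range p, (B n : 𝓞 K) * ζ ^ n = ∑ k ∈ s, (b k : 𝓞 K) * ζ ^ e k := by
    rw [← hs, sum_image he]
    exact sum_congr rfl fun k hk => by rw [hB k hk]
  have hlt : ∀ k ∈ s, e k < p := fun k hk => mem_range.mp (hs ▸ mem_image_of_mem e hk)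
  rw [← hB i hi, ← hB j hj, intCast_coeff_eq_of_sum_pow_mem_span hp hζ (hsum ▸ h) (hlt i hi),
    intCast_coeff_eq_of_sum_pow_mem_span hp hζ (hsum ▸ h) (hlt j hj)]

theorem intCast_coeff_eq_of_add_sum_pow_pow_mod_mem_span (hp : p.Prime)
    (hζ : IsPrimitiveRoot ζ p) {u : ℕ} (hu : orderOf (u : ZMod p) = p - 1) {a : ℤ} {c : ℕ → ℤ}
    (h : (a : 𝓞 K) + ∑ i ∈ range (p - 1), (c i : 𝓞 K) * ζ ^ (u ^ i % p) ∈
      Ideal.span {(p : 𝓞 K)}) {i : ℕ} (hi : i < p - 1) : (c i : ZMod p) = a := by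
  have := Fact.mk hp
  set e : Option ℕ → ℕ := fun o => o.elim 0 (u ^ · % p)
  have he : Set.InjOn e (insertNone (range (p - 1))) := by
    rintro (_ | k) hk (_ | l) hl hkl
    · rfl
    · exact absurd hkl.symm (pow_mod_ne_zero_of_orderOf_eq hu l)
    · exact absurd hkl (pow_mod_ne_zero_of_orderOf_eq hu k)
    · exact congrArg some (pow_mod_injOn_range_of_orderOf_eq hu
        (some_mem_insertNone.mp (mem_coe.mp hk)) (some_mem_insertNone.mp (mem_coe.mp hl)) hkl)
  have hs : (insertNone (range (p - 1))).image e = range p := by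
    refine eq_of_subset_of_card_le (fun n hn => ?_) ?_
    · obtain ⟨_ | k, -, rfl⟩ := mem_image.mp hn
      · exact mem_range.mpr hp.pos
      · exact mem_range.mpr (Nat.mod_lt _ hp.pos)
    · rw [card_image_of_injOn he, card_insertNone, card_range, card_range]
      have := hp.one_le
      omega
  have h' : ∑ o ∈ insertNone (range (p - 1)), ((o.elim a c : ℤ) : 𝓞 K) * ζ ^ e o ∈
      Ideal.span {(p : 𝓞 K)} := by
    convert h using 1
    rw [add_sum_eq_sum_insertNone]
    refine sum_congr rfl ?_
    rintro (_ | k) - <;> simp [e]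
  exact intCast_coeff_eq_of_sum_mem_span hp hζ he hs h'
    (some_mem_insertNone.mpr (mem_range.mpr hi)) none_mem_insertNone

end IsPrimitiveRoot

/-- Suppose `V = γ + γ₀ζ + γ₁ζ^(u₁) + ⋯ + γ_(p-3)ζ^(u_(p-3))` with integer coefficients
and `σ(V) ≡ μV mod p·O_K`, where `μ ≢ 0, 1 mod p`.  Then `γ ≡ -γ_(p-3)/(μ-1) mod p` and
`γ_k ≡ -(μ^(-1) + ⋯ + μ^(-(k+1)))·γ_(p-3) mod p` for `0 ≤ k ≤ p-4`. -/
theorem stmt_10 (p : ℕ+) (hp : (p : ℕ).Prime) (hodd : Odd (p : ℕ))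
    (K : Type) [Field K] [NumberField K] [IsCyclotomicExtension {(p : ℕ)} ℚ K]
    (ζ : 𝓞 K) (hζ : IsPrimitiveRoot ζ p)
    (u : ℕ) (hu : orderOf (u : ZMod p) = (p : ℕ) - 1)
    (σ : 𝓞 K ≃+* 𝓞 K) (hσ : σ ζ = ζ ^ u)
    (μ : ℤ) (hμ0 : (μ : ZMod p) ≠ 0) (hμ1 : (μ : ZMod p) ≠ 1)
    (γ : ℤ) (g : ℕ → ℤ) (V : 𝓞 K)
    (hV : V = (γ : 𝓞 K) + ∑ i ∈ Finset.range ((p : ℕ) - 2), (g i : 𝓞 K) * ζ ^ (u ^ i % (p : ℕ)))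
    (hσV : σ V - (μ : 𝓞 K) * V ∈ Ideal.span {((p : ℕ) : 𝓞 K)}) :
    (γ : ZMod p) = -(g ((p : ℕ) - 3) : ZMod p) * ((μ : ZMod p) - 1)⁻¹ ∧
      ∀ k ≤ (p : ℕ) - 4,
        (g k : ZMod p) =
          -(∑ j ∈ Finset.Icc 1 (k + 1), ((μ : ZMod p)⁻¹) ^ j) * (g ((p : ℕ) - 3) : ZMod p) := by
  have : Fact (p : ℕ).Prime := ⟨hp⟩
  have hp3 : 3 ≤ (p : ℕ) := by
    obtain ⟨m, hm⟩ := hodd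
    have := hp.two_le
    omega
  rw [map_sub_mul_eq_add_sum_pow_pow_mod σ hζ.pow_eq_one hσ μ γ g _ hV,
    show (p : ℕ) - 2 + 1 = p - 1 by omega] at hσV
  have hc := fun i (hi : i < (p : ℕ) - 1) =>
    hζ.intCast_coeff_eq_of_add_sum_pow_pow_mod_mem_span hp hu hσV hi
  have hγ : (1 - (μ : ZMod p)) * γ = g (p - 3) := by
    simpa [show (p : ℕ) - 2 ≠ 0 by omega, show (p : ℕ) - 2 - 1 = p - 3 by omega] using
      (hc (p - 2) (by omega)).symm
  have h0 : -((μ : ZMod p) * g 0) = g (p - 3) := by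
    simpa [show 0 ≠ (p : ℕ) - 2 by omega, hγ] using hc 0 (by omega)
  have hstep : ∀ k < (p : ℕ) - 4, (g k : ZMod p) - μ * g (k + 1) = g (p - 3) := fun k hk => by
    simpa [show k + 1 ≠ (p : ℕ) - 2 by omega, hγ] using hc (k + 1) (by omega)
  refine ⟨?_, eq_neg_sum_Icc_inv_pow_mul_of_sub_mul_eq hμ0 h0 hstep⟩
  rw [← hγ]
  field_simp [sub_ne_zero.mpr hμ1]
  ring
end

section
/- Let p be an odd prime, K = ℚ(ζ) the p-th cyclotomic field, π = (1-ζ)O_K. Every unit η of the ring of integers O_{K⁺} of the maximal real subfield K⁺ is semi-primary: there exists c ∈ ℤ with c ≢ 0 mod p such that η ≡ c mod π². -/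
/-!
Write `λ = ζ - 1`. Since `𝓞 K ⧸ (λ)` has `p` elements, every integer of `K` is congruent to a
rational integer mod `λ`; applying this twice gives `η ≡ c + d λ mod λ²` with `c, d ∈ ℤ`.
Conjugation maps `λ` to `ζ⁻¹ - 1 = -ζ⁻¹ λ ≡ -λ mod λ²` and fixes `η`, so also `η ≡ c - d λ`.
Hence `λ² ∣ 2 d λ`, so `λ ∣ 2 d`, and since `p` is odd, `λ ∣ d`: `η ≡ c mod λ²`.
Finally `p ∤ c`, as otherwise `λ` would divide the unit `η`.
-/

open scoped NumberField

open Ideal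

theorem intCast_surjective_of_natCard_eq_prime {R : Type*} [Ring R] {p : ℕ} (hp : p.Prime)
    (hR : Nat.card R = p) : Function.Surjective (Int.cast : ℤ → R) := by
  have : Finite R := Nat.finite_of_card_ne_zero (hR ▸ hp.ne_zero)
  have := Fintype.ofFinite R
  intro x
  have hcard : Fintype.card R = p := by rwa [← Nat.card_eq_fintype_card]
  obtain ⟨n, rfl⟩ := (ZMod.ringEquivOfPrime R hp hcard).surjective x
  obtain ⟨m, rfl⟩ := ZMod.intCast_surjective n
  exact ⟨m, (map_intCast _ m).symm⟩

theorem exists_intCast_add_mul_sub_dvd_sq {R : Type*} [CommRing R] {l : R}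
    (hres : ∀ y : R, ∃ n : ℤ, l ∣ y - n) (x : R) : ∃ c d : ℤ, l ^ 2 ∣ x - (c + d * l) := by
  obtain ⟨c, u, hu⟩ := hres x
  obtain ⟨d, w, hw⟩ := hres u
  exact ⟨c, d, w, by linear_combination hu + l * hw⟩

theorem sq_dvd_sub_of_sq_dvd_sub_add_mul {R : Type*} [CommRing R] [IsDomain R] (σ : R →+* R)
    {l a b x : R} (hl : Prime l) (h2 : ¬ l ∣ 2) (hσl : l ^ 2 ∣ σ l + l) (ha : σ a = a)
    (hb : σ b = b) (hx : σ x = x) (h : l ^ 2 ∣ x - (a + b * l)) : l ^ 2 ∣ x - a := by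
  have hl_dvd : l ∣ σ l := by
    simpa using dvd_sub ((dvd_pow_self l two_ne_zero).trans hσl) (dvd_refl l)
  have hconj : l ^ 2 ∣ x - (a - b * l) := by
    have hσ : l ^ 2 ∣ x - (a + b * σ l) :=
      (pow_dvd_pow_of_dvd hl_dvd 2).trans (by simpa [ha, hb, hx] using map_dvd σ h)
    convert dvd_add hσ (hσl.mul_left b) using 1
    ring
  have hb : l ∣ b := by
    have : l ^ 2 ∣ 2 * b * l := by
      convert dvd_sub hconj h using 1
      ring
    rw [pow_two, mul_dvd_mul_iff_right hl.ne_zero] at this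
    exact (hl.dvd_mul.mp this).resolve_left h2
  convert dvd_add h (pow_two l ▸ mul_dvd_mul_right hb l) using 1
  ring

theorem sq_sub_one_dvd_map_sub_one_add_sub_one {R : Type*} [CommRing R] (σ : R →+* R) {ζ : R}
    {n : ℕ} (hn : 0 < n) (hζ : ζ ^ n = 1) (hσ : σ ζ = ζ ^ (n - 1)) :
    (ζ - 1) ^ 2 ∣ σ (ζ - 1) + (ζ - 1) := by
  have hinv : ζ ^ (n - 1) * ζ = 1 := by rw [← pow_succ, Nat.sub_add_cancel hn, hζ]
  exact ⟨ζ ^ (n - 1), by rw [map_sub, map_one, hσ]; linear_combination (2 - ζ) * hinv⟩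

namespace IsPrimitiveRoot

variable {p : ℕ} [Fact p.Prime] {K : Type*} [Field K] [NumberField K] {ζ : K}

theorem exists_int_toInteger_sub_one_dvd_sub [hK : IsCyclotomicExtension {p} ℚ K]
    (hζ : IsPrimitiveRoot ζ p) (x : 𝓞 K) : ∃ n : ℤ, hζ.toInteger - 1 ∣ x - n := by
  have hcard : Nat.card (𝓞 K ⧸ span {hζ.toInteger - 1}) = p := by
    rw [← Submodule.cardQuot_apply, ← absNorm_apply]
    rw [← pow_one p] at hK hζ
    exact IsCyclotomicExtension.Rat.absNorm_span_zeta_sub_one p 0 hζ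
  obtain ⟨n, hn⟩ := intCast_surjective_of_natCard_eq_prime Fact.out hcard (Ideal.Quotient.mk _ x)
  exact ⟨n, mem_span_singleton.mp (Ideal.Quotient.eq.mp (by rw [map_intCast]; exact hn.symm))⟩

end IsPrimitiveRoot

/-- Every unit `η` of the ring of integers of the maximal real subfield `K⁺` (realized
here as a unit of `O_K` fixed by complex conjugation) is semi-primary: `η ≡ c mod π²`
for some integer `c` coprime to `p`. -/
theorem stmt_13 (p : ℕ+) (hp : (p : ℕ).Prime) (hodd : Odd (p : ℕ))
    (K : Type) [Field K] [NumberField K] [IsCyclotomicExtension {(p : ℕ)} ℚ K]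
    (ζ : 𝓞 K) (hζ : IsPrimitiveRoot ζ p)
    (conj : 𝓞 K ≃+* 𝓞 K) (hconj : conj ζ = ζ ^ ((p : ℕ) - 1))
    (η : 𝓞 K) (hunit : IsUnit η) (hreal : conj η = η) :
    ∃ c : ℤ, ¬ ((p : ℕ) : ℤ) ∣ c ∧
      η - (c : 𝓞 K) ∈ (Ideal.span {1 - ζ} : Ideal (𝓞 K)) ^ 2 := by
  have : Fact (p : ℕ).Prime := ⟨hp⟩
  have hζK : IsPrimitiveRoot (ζ : K) p :=
    hζ.map_of_injective NumberField.RingOfIntegers.coe_injective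
  have hprime : Prime (ζ - 1) := hζK.zeta_sub_one_prime'
  have hnot2 : ¬ ζ - 1 ∣ 2 := by
    have h2p : 2 < (p : ℕ) := by
      have := Nat.odd_iff.mp hodd
      have := hp.two_le
      omega
    simpa [mem_span_singleton] using
      IsCyclotomicExtension.Rat.two_not_mem_span_zeta_sub_one' p hζK h2p
  obtain ⟨c, d, hcd⟩ :=
    exists_intCast_add_mul_sub_dvd_sq hζK.exists_int_toInteger_sub_one_dvd_sub η
  have key : (ζ - 1) ^ 2 ∣ η - c :=
    sq_dvd_sub_of_sq_dvd_sub_add_mul (conj : 𝓞 K →+* 𝓞 K) hprime hnot2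
      (sq_sub_one_dvd_map_sub_one_add_sub_one _ p.pos hζ.pow_eq_one hconj)
      (map_intCast _ c) (map_intCast _ d) hreal hcd
  refine ⟨c, fun hpc ↦ ?_, ?_⟩
  · have hc : ζ - 1 ∣ (c : 𝓞 K) :=
      (IsCyclotomicExtension.Rat.zeta_sub_one_dvd_intCast_iff' p hζK).mpr hpc
    have hη : ζ - 1 ∣ η := by
      simpa using dvd_add ((dvd_pow_self _ two_ne_zero).trans key) hc
    exact hprime.not_isUnit (isUnit_of_dvd_unit hη hunit)
  · rwa [span_singleton_pow, mem_span_singleton, ← neg_sub ζ 1, neg_sq]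
end

section
/- Let p be an odd prime, K = ℚ(ζ) the p-th cyclotomic field, π = (1-ζ)O_K. If β ∈ O_K with β ≢ 0 mod π, then there exists a natural number w with 0 ≤ w ≤ p-1 such that ζ^w·β is semi-primary, i.e., ζ^w·β ≡ c mod π² for some c ∈ ℤ coprime to p. -/
/-!
Modulo `π = 1 - ζ` every integer of `ℚ(ζ)` is congruent to a rational integer (the residue field
is `𝔽_p`), so modulo `π²` we can write `β ≡ a + b π` with `a, b ∈ ℤ`, and `p ∤ a` because
`π ∤ β`. Since `ζ ^ w = (1 - π) ^ w ≡ 1 - w π`, we get `ζ ^ w β ≡ a + (b - w a) π`, and choosing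
`w ≡ b / a (mod p)` kills the linear term, because `π ∣ p`.
-/

open scoped NumberField
open Polynomial

section SemiPrimary

variable {R : Type*} [CommRing R]

theorem one_sub_sq_dvd_pow_sub (ζ : R) (n : ℕ) : (1 - ζ) ^ 2 ∣ ζ ^ n - (1 - n * (1 - ζ)) := by
  induction n with
  | zero => simp
  | succ n ih =>
    have key : ζ ^ (n + 1) - (1 - ((n + 1 : ℕ) : R) * (1 - ζ)) =
        ζ * (ζ ^ n - (1 - n * (1 - ζ))) + n * (1 - ζ) ^ 2 := by
      push_cast; ring
    rw [key]
    exact dvd_add (ih.mul_left ζ) (dvd_mul_left _ _)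

theorem PowerBasis.exists_intCast_sub_dvd (B : PowerBasis ℤ R) (x : R) :
    ∃ n : ℤ, 1 - B.gen ∣ x - n := by
  obtain ⟨f, rfl⟩ := B.exists_eq_aeval' x
  refine ⟨f.eval 1, ?_⟩
  have h := sub_dvd_eval_sub B.gen 1 (f.map (algebraMap ℤ R))
  rw [eval_map_algebraMap, eval_map_algebraMap, ← map_one (algebraMap ℤ R),
    aeval_algebraMap_apply_eq_algebraMap_eval, ← neg_sub, neg_dvd] at h
  simpa using h

theorem exists_intCast_add_mul_sub_sq_dvd {u : R} (h : ∀ x : R, ∃ n : ℤ, u ∣ x - n) (x : R) :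
    ∃ a b : ℤ, u ^ 2 ∣ x - (a + b * u) := by
  obtain ⟨a, y, hy⟩ := h x
  obtain ⟨b, z, hz⟩ := h y
  exact ⟨a, b, z, by linear_combination hy + u * hz⟩

theorem Nat.Prime.exists_lt_dvd_sub_mul {p : ℕ} (hp : p.Prime) {a : ℤ} (ha : ¬ (p : ℤ) ∣ a)
    (b : ℤ) : ∃ w < p, (p : ℤ) ∣ b - w * a := by
  have := Fact.mk hp
  have ha' : (a : ZMod p) ≠ 0 := by rwa [Ne, ZMod.intCast_zmod_eq_zero_iff_dvd]
  refine ⟨(b / a : ZMod p).val, ZMod.val_lt _, ?_⟩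
  rw [← ZMod.intCast_zmod_eq_zero_iff_dvd]
  push_cast
  rw [ZMod.natCast_val, ZMod.cast_id, div_mul_cancel₀ _ ha', sub_self]

theorem exists_pow_mul_sub_intCast_sq_dvd {p : ℕ} (hp : p.Prime) {ζ : R}
    (hπp : 1 - ζ ∣ (p : R)) (hres : ∀ x : R, ∃ n : ℤ, 1 - ζ ∣ x - n) {β : R}
    (hβ : ¬ 1 - ζ ∣ β) :
    ∃ w < p, ∃ c : ℤ, ¬ (p : ℤ) ∣ c ∧ (1 - ζ) ^ 2 ∣ ζ ^ w * β - c := by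
  set π := 1 - ζ
  have hπ_int {n : ℤ} (hn : (p : ℤ) ∣ n) : π ∣ (n : R) := by
    obtain ⟨m, rfl⟩ := hn
    exact_mod_cast hπp.mul_right (m : R)
  obtain ⟨a, b, hab⟩ := exists_intCast_add_mul_sub_sq_dvd hres β
  have ha : ¬ (p : ℤ) ∣ a := by
    intro ha
    have hπβ : π ∣ β - (a + b * π) := (dvd_pow_self π two_ne_zero).trans hab
    exact hβ (by convert (hπβ.add (hπ_int ha)).add (dvd_mul_left π b) using 1; ring)
  obtain ⟨w, hwp, hw⟩ := hp.exists_lt_dvd_sub_mul ha b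
  refine ⟨w, hwp, a, ha, ?_⟩
  have key : ζ ^ w * β - a = (ζ ^ w - (1 - w * π)) * β + (1 - w * π) * (β - (a + b * π))
      + ((b - w * a : ℤ) : R) * π - w * b * π ^ 2 := by
    push_cast; ring
  rw [key]
  refine (dvd_add (dvd_add ((one_sub_sq_dvd_pow_sub ζ w).mul_right β) (hab.mul_left _)) ?_).sub
    (dvd_mul_left _ _)
  rw [sq]
  exact mul_dvd_mul_right (hπ_int hw) π

end SemiPrimary

theorem stmt_15_general (p : ℕ+) (hp : (p : ℕ).Prime)
    (K : Type) [Field K] [NumberField K] [IsCyclotomicExtension {(p : ℕ)} ℚ K]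
    (ζ : 𝓞 K) (hζ : IsPrimitiveRoot ζ p)
    (β : 𝓞 K) (hβ : β ∉ (Ideal.span {1 - ζ} : Ideal (𝓞 K))) :
    ∃ w : ℕ, w ≤ (p : ℕ) - 1 ∧ ∃ c : ℤ, ¬ ((p : ℕ) : ℤ) ∣ c ∧
      ζ ^ w * β - (c : 𝓞 K) ∈ (Ideal.span {1 - ζ} : Ideal (𝓞 K)) ^ 2 := by
  have : Fact (p : ℕ).Prime := ⟨hp⟩
  have hζK : IsPrimitiveRoot (ζ : K) p :=
    hζ.map_of_injective NumberField.RingOfIntegers.coe_injective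
  have hπp : 1 - ζ ∣ ((p : ℕ) : 𝓞 K) := by
    rw [← neg_sub, neg_dvd]
    exact_mod_cast hζK.toInteger_sub_one_dvd_prime'
  have hres (x : 𝓞 K) : ∃ n : ℤ, 1 - ζ ∣ x - n := by
    simpa using hζK.integralPowerBasis.exists_intCast_sub_dvd x
  rw [Ideal.mem_span_singleton] at hβ
  obtain ⟨w, hwp, c, hc, hdvd⟩ := exists_pow_mul_sub_intCast_sq_dvd hp hπp hres hβ
  refine ⟨w, Nat.le_sub_one_of_lt hwp, c, hc, ?_⟩
  rwa [Ideal.span_singleton_pow, Ideal.mem_span_singleton]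

/-- If `β ∈ O_K` with `β ≢ 0 mod π`, then there is a natural number `w ≤ p-1` such that
`ζ^w·β` is semi-primary: `ζ^w·β ≡ c mod π²` for some integer `c` coprime to `p`. -/
theorem stmt_15 (p : ℕ+) (hp : (p : ℕ).Prime) (hodd : Odd (p : ℕ))
    (K : Type) [Field K] [NumberField K] [IsCyclotomicExtension {(p : ℕ)} ℚ K]
    (ζ : 𝓞 K) (hζ : IsPrimitiveRoot ζ p)
    (β : 𝓞 K) (hβ : β ∉ (Ideal.span {1 - ζ} : Ideal (𝓞 K))) :
    ∃ w : ℕ, w ≤ (p : ℕ) - 1 ∧ ∃ c : ℤ, ¬ ((p : ℕ) : ℤ) ∣ c ∧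
      ζ ^ w * β - (c : 𝓞 K) ∈ (Ideal.span {1 - ζ} : Ideal (𝓞 K)) ^ 2 :=
  stmt_15_general p hp K ζ hζ β hβ
end

section
/- Let p be an odd prime, K = ℚ(ζ), π = (1-ζ)O_K, u a primitive root mod p, σ(ζ) = ζ^u, and μ = u^(2m+1) mod p for some 1 ≤ m ≤ (p-3)/2. Suppose C ∈ K with v_π(C) = 0, C·C̄ = 1, C ≡ 1 mod π, σ(C) ≡ C^μ mod π^(p+1), and C is non-primary (i.e., v_π(C-1) ≤ p-2). Then v_π(C - 1) = 2m+1. -/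
open scoped NumberField

/-!
Write `δ = C - 1` and `v(δ) = exp(-n)`, so `1 ≤ n ≤ p - 2`. Modulo `π^(n+1)` the automorphism `σ`
multiplies `δ` by `u^n`: it acts trivially on the residue field `𝔽_p` and sends `1 - ζ` to
`1 - ζ^u ≡ u(1 - ζ) mod π²`. Also `C^μ ≡ 1 + μδ mod π^(2n)`. Hence `σ C ≡ C^μ mod π^(n+1)` gives
`(u^n - μ)δ ≡ 0 mod π^(n+1)`, i.e. `u^n ≡ μ ≡ u^(2m+1) mod p`, and as `u` has order `p - 1` while
`n` and `2m+1` both lie below `p - 1`, they are equal.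
-/

namespace Valuation

variable {Γ₀ : Type*} [LinearOrderedCommGroupWithZero Γ₀]

section CommRing

variable {R : Type*} [CommRing R] (v : Valuation R Γ₀)

theorem map_natCast_le_one (n : ℕ) : v n ≤ 1 := by
  induction n with
  | zero => simp
  | succ n ih => simpa using v.map_add_le ih v.map_one.le

theorem map_pow_sub_one_sub_mul_le {x : R} (hx : v x ≤ 1) (n : ℕ) :
    v (x ^ n - 1 - n * (x - 1)) ≤ v (x - 1) ^ 2 := by
  induction n with
  | zero => simp
  | succ n ih =>
    have h : x ^ (n + 1) - 1 - (n + 1 : ℕ) * (x - 1)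
        = x * (x ^ n - 1 - n * (x - 1)) + n * (x - 1) ^ 2 := by push_cast; ring
    rw [h]
    refine v.map_add_le ?_ ?_ <;> rw [map_mul]
    · exact mul_le_of_le_one_of_le hx ih
    · exact mul_le_of_le_one_of_le (v.map_natCast_le_one n) (map_pow v _ _).le

theorem map_pow_sub_pow_lt {y z : R} {r : Γ₀} (hy : v y ≤ r) (hz : v z ≤ r) (h : v (y - z) < r)
    (n : ℕ) : v (y ^ n - z ^ n) < r ^ n := by
  have hr : 0 < r := lt_of_le_of_lt zero_le h
  induction n with
  | zero => simp
  | succ n ih =>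
    have h' : y ^ (n + 1) - z ^ (n + 1) = y * (y ^ n - z ^ n) + (y - z) * z ^ n := by ring
    rw [h', pow_succ']
    refine v.map_add_lt ?_ ?_ <;> rw [map_mul]
    · exact mul_lt_mul_of_le_of_lt_of_nonneg_of_pos hy ih zero_le hr
    · refine mul_lt_mul_of_lt_of_le_of_nonneg_of_pos h ?_ zero_le (pow_pos hr n)
      rw [map_pow]
      exact pow_le_pow_left₀ zero_le hz n

end CommRing

section Field

variable {K F : Type*} [Field K] (v : Valuation K Γ₀) [FunLike F K K] [RingHomClass F K K]

theorem map_sub_pow_mul_lt (σ : F) (hσv : ∀ x, v (σ x) = v x)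
    (hσ : ∀ a, v a = 1 → v (σ a - a) < 1) {ϖ c : K} (hc : v c ≤ 1)
    (hϖ : v (σ ϖ - c * ϖ) < v ϖ) {x : K} {n : ℕ} (hx : v x = v ϖ ^ n) :
    v (σ x - c ^ n * x) < v x := by
  have hϖ0 : 0 < v ϖ := lt_of_le_of_lt zero_le hϖ
  set a := x / ϖ ^ n
  have ha : v a = 1 := by rw [map_div₀, map_pow, hx, div_self (pow_pos hϖ0 n).ne']
  have hxa : x = a * ϖ ^ n := by
    rw [div_mul_cancel₀ _ (pow_ne_zero n ((v.pos_iff).1 hϖ0))]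
  have key : σ x - c ^ n * x = σ a * (σ ϖ ^ n - (c * ϖ) ^ n) + (c * ϖ) ^ n * (σ a - a) := by
    rw [hxa, map_mul, map_pow]; ring
  rw [key, hx]
  refine v.map_add_lt ?_ ?_ <;> rw [map_mul]
  · rw [hσv, ha, one_mul]
    refine v.map_pow_sub_pow_lt (hσv ϖ).le ?_ hϖ n
    rw [map_mul]
    exact mul_le_of_le_one_left zero_le hc
  · calc v ((c * ϖ) ^ n) * v (σ a - a) < v ϖ ^ n * 1 := by
          refine mul_lt_mul_of_le_of_lt_of_nonneg_of_pos ?_ (hσ a ha) zero_le (pow_pos hϖ0 n)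
          rw [map_pow, map_mul]
          exact pow_le_pow_left₀ zero_le (mul_le_of_le_one_left zero_le hc) n
      _ = v ϖ ^ n := mul_one _

end Field

end Valuation

namespace IsDedekindDomain.HeightOneSpectrum

open WithZero

variable {R K : Type*} [CommRing R] [IsDedekindDomain R] [Field K] [Algebra R K]
  [IsFractionRing R K] (v : HeightOneSpectrum R) {ϖ : R}

theorem intValuation_map_of_associated (hv : v.asIdeal = Ideal.span {ϖ}) (τ : R ≃+* R)
    (hτ : Associated (τ ϖ) ϖ) (r : R) : v.intValuation (τ r) = v.intValuation r := by
  rcases eq_or_ne r 0 with rfl | hr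
  · simp
  rw [v.intValuation_eq_exp_neg_multiplicity hr,
    v.intValuation_eq_exp_neg_multiplicity (by simpa using hr)]
  congr 3
  refine multiplicity_eq_of_emultiplicity_eq (emultiplicity_eq_emultiplicity_iff.2 fun n ↦ ?_)
  simp only [hv, Ideal.span_singleton_pow, Ideal.dvd_span_singleton, Ideal.mem_span_singleton]
  rw [← (hτ.pow_pow (n := n)).dvd_iff_dvd_left, ← map_pow, map_dvd_iff]

theorem valuation_map_of_associated (hv : v.asIdeal = Ideal.span {ϖ}) {F : Type*} [FunLike F K K]
    [RingHomClass F K K] (σ : F) (τ : R ≃+* R)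
    (hστ : ∀ r, σ (algebraMap R K r) = algebraMap R K (τ r)) (hτ : Associated (τ ϖ) ϖ) (x : K) :
    v.valuation K (σ x) = v.valuation K x := by
  obtain ⟨a, b, -, rfl⟩ := IsFractionRing.div_surjective (A := R) x
  simp only [map_div₀, hστ, valuation_of_algebraMap, v.intValuation_map_of_associated hv τ hτ]

theorem valuation_eq_exp_neg_one_of_asIdeal_eq (hv : v.asIdeal = Ideal.span {ϖ}) :
    v.valuation K (algebraMap R K ϖ) = exp (-1) := by
  have hϖ : ϖ ≠ 0 := by
    rintro rfl
    exact v.ne_bot (by rw [hv, Ideal.span_singleton_eq_bot])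
  rw [valuation_of_algebraMap, v.intValuation_singleton hϖ hv]

end IsDedekindDomain.HeightOneSpectrum

open IsDedekindDomain HeightOneSpectrum WithZero NumberField

variable {K : Type*} [Field K] [NumberField K] {ζ : 𝓞 K} {v : HeightOneSpectrum (𝓞 K)}

theorem valuation_one_sub_zeta (hv : v.asIdeal = Ideal.span {1 - ζ}) :
    v.valuation K (1 - ζ) = exp (-1) := by
  simpa using v.valuation_eq_exp_neg_one_of_asIdeal_eq (K := K) hv

theorem valuation_map_one_sub_zeta_sub_lt (hv : v.asIdeal = Ideal.span {1 - ζ})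
    {σ : K ≃ₐ[ℚ] K} {u : ℕ} (hσ : σ ζ = (ζ : K) ^ u) :
    v.valuation K (σ (1 - ζ) - u * (1 - ζ)) < v.valuation K (1 - ζ) := by
  have hζ1 : v.valuation K ζ ≤ 1 := by simpa using v.valuation_le_one (K := K) ζ
  refine lt_of_eq_of_lt ?_ (((v.valuation K).map_pow_sub_one_sub_mul_le hζ1 u).trans_lt ?_)
  · rw [map_sub σ, map_one, hσ, ← Valuation.map_neg]
    ring_nf
  · rw [Valuation.map_sub_swap, valuation_one_sub_zeta hv, ← exp_nsmul, exp_lt_exp]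
    norm_num

namespace IsPrimitiveRoot

variable {n : ℕ} [NeZero n]

theorem valuation_algEquiv_apply (hζ : IsPrimitiveRoot ζ n) (hv : v.asIdeal = Ideal.span {1 - ζ})
    (σ : K ≃ₐ[ℚ] K) (x : K) : v.valuation K (σ x) = v.valuation K x := by
  set τ := galRestrict ℤ ℚ K (𝓞 K) σ
  refine v.valuation_map_of_associated hv σ (τ : 𝓞 K ≃+* 𝓞 K)
    (fun r ↦ (algebraMap_galRestrict_apply ℤ σ r).symm) ?_ x
  show Associated (τ (1 - ζ)) (1 - ζ)
  rw [← neg_sub ζ 1, map_neg]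
  exact (hζ.associated_sub_one_map_sub_one τ).symm.neg_left.neg_right

variable [IsCyclotomicExtension {n} ℚ K]

theorem exists_int_sub_one_dvd_sub (hζ : IsPrimitiveRoot ζ n) (x : 𝓞 K) :
    ∃ c : ℤ, ζ - 1 ∣ x - c := by
  have hζK : IsPrimitiveRoot (ζ : K) n := hζ.map_of_injective RingOfIntegers.coe_injective
  have hx : x ∈ Algebra.adjoin ℤ {ζ} := by
    rw [show ζ = hζK.toInteger from rfl, IsCyclotomicExtension.Rat.adjoin_singleton_eq_top hζK]
    trivial
  rw [Algebra.adjoin_singleton_eq_range_aeval] at hx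
  obtain ⟨f, rfl⟩ := hx
  refine ⟨f.eval 1, ?_⟩
  simpa [Polynomial.aeval_def, Polynomial.eval_map, Polynomial.eval₂_at_one] using
    Polynomial.sub_dvd_eval_sub ζ 1 (f.map (Int.castRingHom (𝓞 K)))

theorem exists_int_valuation_sub_lt_one (hζ : IsPrimitiveRoot ζ n)
    (hv : v.asIdeal = Ideal.span {1 - ζ}) {a : K} (ha : v.valuation K a ≤ 1) :
    ∃ c : ℤ, v.valuation K (a - c) < 1 := by
  obtain ⟨b, hb⟩ := v.exists_valuation_sub_lt_of_integer ha 1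
  obtain ⟨c, hc⟩ := hζ.exists_int_sub_one_dvd_sub b
  refine ⟨c, ?_⟩
  have hbc : v.valuation K (algebraMap (𝓞 K) K (b - c)) < 1 := by
    rw [valuation_lt_one_iff_mem, hv, Ideal.mem_span_singleton, ← neg_dvd, neg_sub]
    exact hc
  rw [map_sub, map_intCast] at hbc
  rw [show a - c = -(algebraMap (𝓞 K) K b - a) + (algebraMap (𝓞 K) K b - c) by ring]
  exact Valuation.map_add_lt _ (by rwa [Valuation.map_neg]) hbc

theorem valuation_algEquiv_sub_self_lt_one (hζ : IsPrimitiveRoot ζ n)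
    (hv : v.asIdeal = Ideal.span {1 - ζ}) (σ : K ≃ₐ[ℚ] K) {a : K} (ha : v.valuation K a ≤ 1) :
    v.valuation K (σ a - a) < 1 := by
  obtain ⟨c, hc⟩ := hζ.exists_int_valuation_sub_lt_one hv ha
  rw [show σ a - a = σ (a - c) - (a - c) by rw [map_sub, map_intCast]; ring]
  exact Valuation.map_sub_lt _ (by rwa [hζ.valuation_algEquiv_apply hv]) hc

section Prime

variable {p : ℕ} [Fact p.Prime] [IsCyclotomicExtension {p} ℚ K]

theorem valuation_intCast_lt_one_iff (hζ : IsPrimitiveRoot ζ p)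
    (hv : v.asIdeal = Ideal.span {1 - ζ}) {k : ℤ} : v.valuation K k < 1 ↔ (p : ℤ) ∣ k := by
  have hζK : IsPrimitiveRoot (ζ : K) p := hζ.map_of_injective RingOfIntegers.coe_injective
  rw [← IsCyclotomicExtension.Rat.zeta_sub_one_dvd_intCast_iff' p hζK,
    ← map_intCast (algebraMap (𝓞 K) K), valuation_lt_one_iff_mem, hv, Ideal.mem_span_singleton,
    ← neg_dvd, neg_sub]
  rfl

theorem pow_eq_of_valuation_map_sub_pow_lt (hζ : IsPrimitiveRoot ζ p)
    (hv : v.asIdeal = Ideal.span {1 - ζ}) {σ : K ≃ₐ[ℚ] K} {u : ℕ} (hσ : σ ζ = (ζ : K) ^ u)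
    {C : K} {μ n : ℕ} (hn : 1 ≤ n) (hC : v.valuation K (C - 1) = exp (-(n : ℤ)))
    (hσC : v.valuation K (σ C - C ^ μ) < exp (-(n : ℤ))) : (u : ZMod p) ^ n = μ := by
  set δ := C - 1
  have hδ : v.valuation K δ = v.valuation K (1 - ζ) ^ n := by
    rw [hC, valuation_one_sub_zeta hv, ← exp_nsmul, smul_neg, nsmul_one]
  have hδ1 : v.valuation K δ < 1 := by rw [hC, ← exp_zero, exp_lt_exp]; omega
  have hδ0 : 0 < v.valuation K δ := by rw [hC]; exact exp_pos
  have hA : v.valuation K (σ δ - (u : K) ^ n * δ) < v.valuation K δ :=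
    (v.valuation K).map_sub_pow_mul_lt σ (hζ.valuation_algEquiv_apply hv σ)
      (fun a ha ↦ hζ.valuation_algEquiv_sub_self_lt_one hv σ ha.le)
      ((v.valuation K).map_natCast_le_one u) (valuation_map_one_sub_zeta_sub_lt hv hσ) hδ
  have hB : v.valuation K (C ^ μ - 1 - μ * δ) < v.valuation K δ := by
    have hC1 : v.valuation K C ≤ 1 := by
      rw [show C = 1 + δ by ring, Valuation.map_one_add_of_lt _ hδ1]
    refine ((v.valuation K).map_pow_sub_one_sub_mul_le hC1 μ).trans_lt ?_
    rw [sq]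
    exact mul_lt_of_lt_one_left hδ0 hδ1
  have key : (((u ^ n - μ : ℤ)) : K) * δ = (σ C - C ^ μ) - (σ δ - (u : K) ^ n * δ)
      + (C ^ μ - 1 - μ * δ) := by
    simp only [δ, map_sub, map_one]
    push_cast
    ring
  have hlt := Valuation.map_add_lt _ (Valuation.map_sub_lt _ (hσC.trans_eq hC.symm) hA) hB
  rw [← key, map_mul, mul_lt_iff_lt_one_left hδ0, hζ.valuation_intCast_lt_one_iff hv,
    ← ZMod.intCast_zmod_eq_zero_iff_dvd] at hlt
  push_cast at hlt
  exact sub_eq_zero.1 hlt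

end Prime

end IsPrimitiveRoot

theorem stmt_18_general (p : ℕ+) (hp : (p : ℕ).Prime)
    (K : Type) [Field K] [NumberField K] [IsCyclotomicExtension {(p : ℕ)} ℚ K]
    (ζ : 𝓞 K) (hζ : IsPrimitiveRoot ζ p)
    (v : IsDedekindDomain.HeightOneSpectrum (𝓞 K))
    (hv : v.asIdeal = Ideal.span {1 - ζ})
    (u : ℕ) (hu : orderOf (u : ZMod p) = (p : ℕ) - 1)
    (σ : K ≃ₐ[ℚ] K) (hσ : σ (ζ : K) = (ζ : K) ^ u)
    (m : ℕ) (hm2 : m ≤ ((p : ℕ) - 3) / 2)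
    (μ : ℕ) (hμ : (μ : ZMod p) = (u : ZMod p) ^ (2 * m + 1))
    (C : K)
    (hC1 : v.valuation K (C - 1) ≤
      ((Multiplicative.ofAdd (-1 : ℤ) : Multiplicative ℤ) : WithZero (Multiplicative ℤ)))
    (hσC : v.valuation K (σ C - C ^ μ) ≤
      ((Multiplicative.ofAdd (-(((p : ℕ) : ℤ) + 1)) : Multiplicative ℤ) :
        WithZero (Multiplicative ℤ)))
    (hnonprim : ((Multiplicative.ofAdd (-(((p : ℕ) : ℤ) - 2)) : Multiplicative ℤ) :
        WithZero (Multiplicative ℤ)) ≤ v.valuation K (C - 1)) :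
    v.valuation K (C - 1) =
      ((Multiplicative.ofAdd (-(2 * (m : ℤ) + 1)) : Multiplicative ℤ) :
        WithZero (Multiplicative ℤ)) := by
  have : Fact (p : ℕ).Prime := ⟨hp⟩
  simp only [← exp_eq_coe_ofAdd] at hC1 hσC hnonprim ⊢
  have hne : v.valuation K (C - 1) ≠ 0 := ne_bot_of_le_ne_bot exp_ne_zero hnonprim
  obtain ⟨n, hn⟩ : ∃ n : ℕ, v.valuation K (C - 1) = exp (-(n : ℤ)) := by
    have hk := exp_log hne
    set k := log (v.valuation K (C - 1))
    rw [← hk, exp_le_exp] at hC1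
    refine ⟨(-k).toNat, ?_⟩
    rw [← hk, exp_inj]
    omega
  rw [hn, exp_le_exp] at hC1 hnonprim
  have hpow : (u : ZMod p) ^ n = (u : ZMod p) ^ (2 * m + 1) := hμ ▸
    hζ.pow_eq_of_valuation_map_sub_pow_lt hv hσ (by omega) hn
      (hσC.trans_lt (exp_lt_exp.2 (by omega)))
  have hn' : n = 2 * m + 1 :=
    pow_injOn_Iio_orderOf (by rw [Set.mem_Iio, hu]; omega) (by rw [Set.mem_Iio, hu]; omega) hpow
  rw [hn, hn']
  push_cast
  ring_nf

/-- Let `μ ≡ u^(2m+1) mod p` with `1 ≤ m ≤ (p-3)/2`.  Suppose `C ∈ K` satisfies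
`v_π(C) = 0`, `C·C̄ = 1`, `C ≡ 1 mod π`, `σ(C) ≡ C^μ mod π^(p+1)`, and `C` is
non-primary, i.e. `v_π(C-1) ≤ p-2`.  Then `v_π(C-1) = 2m+1`. -/
theorem stmt_18 (p : ℕ+) (hp : (p : ℕ).Prime) (hodd : Odd (p : ℕ))
    (K : Type) [Field K] [NumberField K] [IsCyclotomicExtension {(p : ℕ)} ℚ K]
    (ζ : 𝓞 K) (hζ : IsPrimitiveRoot ζ p)
    (v : IsDedekindDomain.HeightOneSpectrum (𝓞 K))
    (hv : v.asIdeal = Ideal.span {1 - ζ})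
    (u : ℕ) (hu : orderOf (u : ZMod p) = (p : ℕ) - 1)
    (σ : K ≃ₐ[ℚ] K) (hσ : σ (ζ : K) = (ζ : K) ^ u)
    (conj : K ≃ₐ[ℚ] K) (hconj : conj (ζ : K) = (ζ : K)⁻¹)
    (m : ℕ) (hm1 : 1 ≤ m) (hm2 : m ≤ ((p : ℕ) - 3) / 2)
    (μ : ℕ) (hμ : (μ : ZMod p) = (u : ZMod p) ^ (2 * m + 1))
    (C : K) (hC0 : v.valuation K C = 1) (hCconj : C * conj C = 1)
    (hC1 : v.valuation K (C - 1) ≤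
      ((Multiplicative.ofAdd (-1 : ℤ) : Multiplicative ℤ) : WithZero (Multiplicative ℤ)))
    (hσC : v.valuation K (σ C - C ^ μ) ≤
      ((Multiplicative.ofAdd (-(((p : ℕ) : ℤ) + 1)) : Multiplicative ℤ) :
        WithZero (Multiplicative ℤ)))
    (hnonprim : ((Multiplicative.ofAdd (-(((p : ℕ) : ℤ) - 2)) : Multiplicative ℤ) :
        WithZero (Multiplicative ℤ)) ≤ v.valuation K (C - 1)) :
    v.valuation K (C - 1) =
      ((Multiplicative.ofAdd (-(2 * (m : ℤ) + 1)) : Multiplicative ℤ) :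
        WithZero (Multiplicative ℤ)) :=
  stmt_18_general p hp K ζ hζ v hv u hu σ hσ m hm2 μ hμ C hC1 hσC hnonprim
end
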